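/- arXiv:math/0405574 — 8 statements merged into one kernel-verified Lean document; each statement's English description precedes it below -/
import Mathlib

section
/- Let F : ℤ → ℂ be given by F(n) = Σ_{m=1}^{d} λ_m r_m^n, where r_1,…,r_d are pairwise distinct nonzero complex numbers and every λ_m ≠ 0. Fix k ≥ 1 and integers a_1,…,a_k, b_1,…,b_k with a_i ≥ 0 and a_i + b_i ≥ 0 for every i. Call a function Φ : ℕ → ℂ of type (A) if there exist complex numbers α_{i⃗}, β_{i⃗}, γ_{i⃗} (indexed by tuples i⃗ = (i_1,…,i_k) with 0 ≤ i_ν ≤ d−1) such that Φ(n) = Σ_{i⃗} α_{i⃗} Π_{ν=1}^{k} F((a_ν+b_ν)n + i_ν) + Σ_{i⃗} (β_{i⃗} + γ_{i⃗} n) Π_{ν=1}^{k} F(a_ν n + i_ν) for all n. If Φ and Ψ are both of type (A) and Φ(n) = Ψ(n) for n = 1, 2, …, 3d^k, then Φ(n) = Ψ(n) for all n ≥ 0. -/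
open Polynomial Finset

/-- The shift operator on sequences `ℕ → ℂ`. -/
noncomputable def GWshift : Module.End ℂ (ℕ → ℂ) where
  toFun u := fun n => u (n + 1)
  map_add' _ _ := rfl
  map_smul' _ _ := rfl

lemma GWshift_pow (i : ℕ) (u : ℕ → ℂ) (n : ℕ) : (GWshift ^ i) u n = u (n + i) := by
  induction i generalizing u n with
  | zero => rfl
  | succ i ih =>
    rw [pow_succ]
    show (GWshift ^ i) (GWshift u) n = _
    rw [ih]
    rfl

lemma GWaeval_apply (P : ℂ[X]) (u : ℕ → ℂ) (n : ℕ) :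
    (Polynomial.aeval GWshift P) u n
      = ∑ i ∈ Finset.range (P.natDegree + 1), P.coeff i * u (n + i) := by
  conv_lhs => rw [P.as_sum_range_C_mul_X_pow]
  rw [map_sum, LinearMap.sum_apply, Finset.sum_apply]
  refine Finset.sum_congr rfl fun i _ => ?_
  rw [map_mul, aeval_C, aeval_X_pow, Module.End.mul_apply]
  rw [Module.algebraMap_end_apply]
  simp [GWshift_pow]

lemma GWkill_geom (z : ℂ) :
    (Polynomial.aeval GWshift (X - C z)) (fun n => z ^ n) = 0 := by
  funext n
  rw [map_sub, aeval_X, aeval_C, LinearMap.sub_apply]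
  rw [Module.algebraMap_end_apply]
  show z ^ (n + 1) - z • z ^ n = 0
  rw [pow_succ, smul_eq_mul]
  ring

lemma GWkill_lin (z : ℂ) :
    (Polynomial.aeval GWshift ((X - C z) ^ 2)) (fun n => (n : ℂ) * z ^ n) = 0 := by
  rw [map_pow, sq, Module.End.mul_apply]
  have h1 : (Polynomial.aeval GWshift (X - C z)) (fun n => (n : ℂ) * z ^ n)
      = z • (fun n : ℕ => z ^ n) := by
    funext n
    rw [map_sub, aeval_X, aeval_C, LinearMap.sub_apply, Module.algebraMap_end_apply]
    show ((n : ℕ) + 1 : ℕ) * z ^ (n + 1) - z • ((n : ℂ) * z ^ n) = (z • fun n : ℕ => z ^ n) n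
    simp only [smul_eq_mul, Pi.smul_apply]
    push_cast
    rw [pow_succ]
    ring
  rw [h1, map_smul, GWkill_geom, smul_zero]

lemma GWkill_dvd (P Q : ℂ[X]) (h : Q ∣ P) (u : ℕ → ℂ)
    (hu : (Polynomial.aeval GWshift Q) u = 0) :
    (Polynomial.aeval GWshift P) u = 0 := by
  obtain ⟨R, rfl⟩ := h
  rw [mul_comm, map_mul, Module.End.mul_apply, hu, map_zero]

/-- The key "exponential polynomial" vanishing lemma: a function of the form
`n ↦ ∑ⱼ (Aⱼ ρⱼⁿ + (Bⱼ + Cⱼ n) σⱼⁿ)` which vanishes at `n = 1, …, 3·card J`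
vanishes everywhere. -/
lemma GWmain {J : Type*} [Fintype J] (M : ℕ) (hM : M = Fintype.card J + 2 * Fintype.card J)
    (ρ σ : J → ℂ) (hρ : ∀ j, ρ j ≠ 0) (hσ : ∀ j, σ j ≠ 0)
    (A B Cc : J → ℂ) (G : ℕ → ℂ)
    (hG : ∀ n : ℕ, G n = ∑ j, (A j * ρ j ^ n + (B j + Cc j * (n : ℂ)) * σ j ^ n))
    (hvan : ∀ n, 1 ≤ n → n ≤ M → G n = 0) :
    ∀ n, G n = 0 := by
  classical
  set P : ℂ[X] :=
    (∏ j : J, (X - C (ρ j))) * (∏ j : J, (X - C (σ j))) ^ 2 with hP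
  have hm1 : (∏ j : J, (X - C (ρ j))).Monic :=
    monic_prod_of_monic _ _ fun j _ => monic_X_sub_C _
  have hm2 : (∏ j : J, (X - C (σ j))).Monic :=
    monic_prod_of_monic _ _ fun j _ => monic_X_sub_C _
  have hmonic : P.Monic := hm1.mul (hm2.pow _)
  have hd1 : (∏ j : J, (X - C (ρ j))).natDegree = Fintype.card J := by
    rw [natDegree_prod_of_monic _ _ fun j _ => monic_X_sub_C _]
    simp [natDegree_X_sub_C, Finset.card_univ]
  have hd2 : (∏ j : J, (X - C (σ j))).natDegree = Fintype.card J := by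
    rw [natDegree_prod_of_monic _ _ fun j _ => monic_X_sub_C _]
    simp [natDegree_X_sub_C, Finset.card_univ]
  have hdeg : P.natDegree = M := by
    rw [hP, hm1.natDegree_mul (hm2.pow _), natDegree_pow, hd1, hd2, hM]
  have hc0 : P.coeff 0 ≠ 0 := by
    rw [coeff_zero_eq_eval_zero, hP, eval_mul, eval_pow, eval_prod, eval_prod]
    simp only [eval_sub, eval_X, eval_C, zero_sub]
    refine mul_ne_zero ?_ (pow_ne_zero _ ?_) <;>
      exact Finset.prod_ne_zero_iff.2 fun j _ => neg_ne_zero.2 (by first | exact hρ j | exact hσ j)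
  have hann : (Polynomial.aeval GWshift P) G = 0 := by
    have hGfun : G = ∑ j : J, (A j • (fun n : ℕ => ρ j ^ n)
        + (B j • (fun n : ℕ => σ j ^ n) + Cc j • (fun n : ℕ => (n : ℂ) * σ j ^ n))) := by
      funext n
      rw [hG n, Finset.sum_apply]
      refine Finset.sum_congr rfl fun j _ => ?_
      simp only [Pi.add_apply, Pi.smul_apply, smul_eq_mul]
      ring
    rw [hGfun, map_sum]
    refine Finset.sum_eq_zero fun j _ => ?_
    rw [map_add, map_add, map_smul, map_smul, map_smul]
    have k1 : (Polynomial.aeval GWshift P) (fun n : ℕ => ρ j ^ n) = 0 :=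
      GWkill_dvd _ _ (dvd_mul_of_dvd_left
        (Finset.dvd_prod_of_mem _ (Finset.mem_univ j)) _) _ (GWkill_geom _)
    have hdvd2 : (X - C (σ j)) ^ 2 ∣ P :=
      dvd_mul_of_dvd_right
        (pow_dvd_pow_of_dvd (Finset.dvd_prod_of_mem (fun j : J => X - C (σ j)) (Finset.mem_univ j)) 2) _
    have k2 : (Polynomial.aeval GWshift P) (fun n : ℕ => σ j ^ n) = 0 :=
      GWkill_dvd _ _ (dvd_trans (dvd_pow_self _ two_ne_zero) hdvd2) _ (GWkill_geom _)
    have k3 : (Polynomial.aeval GWshift P) (fun n : ℕ => (n : ℂ) * σ j ^ n) = 0 :=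
      GWkill_dvd _ _ hdvd2 _ (GWkill_lin _)
    rw [k1, k2, k3]
    simp
  have hrec : ∀ n : ℕ, ∑ i ∈ Finset.range (M + 1), P.coeff i * G (n + i) = 0 := by
    intro n
    have := congrFun hann n
    rw [GWaeval_apply, hdeg] at this
    simpa using this
  have key : ∀ m : ℕ, G (m + 1) = 0 := by
    intro m
    induction m using Nat.strong_induction_on with
    | _ m ih =>
      by_cases hm : m + 1 ≤ M
      · exact hvan _ (Nat.succ_le_succ (Nat.zero_le _)) hm
      · have hM' : M ≤ m := by omega
        have h := hrec (m - M + 1)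
        rw [Finset.sum_range_succ] at h
        have hz : ∀ i ∈ Finset.range M, P.coeff i * G (m - M + 1 + i) = 0 := by
          intro i hi
          rw [Finset.mem_range] at hi
          have he : m - M + 1 + i = (m - M + i) + 1 := by omega
          rw [he, ih (m - M + i) (by omega)]
          exact mul_zero _
        rw [Finset.sum_eq_zero hz, zero_add] at h
        have hM1 : P.coeff M = 1 := by
          have h1 := hmonic
          rw [Monic, leadingCoeff, hdeg] at h1
          exact h1
        rw [hM1, one_mul] at h
        have he : m - M + 1 + M = m + 1 := by omega
        rwa [he] at h
  have G0 : G 0 = 0 := by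
    have h := hrec 0
    rw [Finset.sum_range_succ'] at h
    have hz : ∀ i ∈ Finset.range M, P.coeff (i + 1) * G (0 + (i + 1)) = 0 := by
      intro i _
      rw [zero_add, key i]
      exact mul_zero _
    rw [Finset.sum_eq_zero hz, zero_add, add_zero] at h
    exact (mul_eq_zero.mp h).resolve_left hc0
  intro n
  cases n with
  | zero => exact G0
  | succ m => exact key m

/-- **Theorem 3** of Greene–Wilf (with the explicit bound `M ≤ 3 d^k`): two
functions of type (A) agreeing at `n = 1, …, 3 d^k` agree everywhere. -/
theorem closed_form_agreement_thm3
    (d : ℕ) (hd : 1 ≤ d)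
    (r : Fin d → ℂ) (lam : Fin d → ℂ)
    (hr_inj : Function.Injective r) (hr0 : ∀ m, r m ≠ 0) (hlam : ∀ m, lam m ≠ 0)
    (F : ℤ → ℂ) (hF : ∀ n : ℤ, F n = ∑ m : Fin d, lam m * r m ^ n)
    (k : ℕ) (hk : 1 ≤ k)
    (a b : Fin k → ℤ)
    (ha : ∀ i, 0 ≤ a i) (hab : ∀ i, 0 ≤ a i + b i)
    (Φ Ψ : ℕ → ℂ)
    (hΦ : ∃ α β γ : (Fin k → Fin d) → ℂ, ∀ n : ℕ, Φ n =
      (∑ idx : Fin k → Fin d, α idx *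
        ∏ ν : Fin k, F ((a ν + b ν) * n + (idx ν : ℤ))) +
      ∑ idx : Fin k → Fin d, (β idx + γ idx * (n : ℂ)) *
        ∏ ν : Fin k, F (a ν * n + (idx ν : ℤ)))
    (hΨ : ∃ α β γ : (Fin k → Fin d) → ℂ, ∀ n : ℕ, Ψ n =
      (∑ idx : Fin k → Fin d, α idx *
        ∏ ν : Fin k, F ((a ν + b ν) * n + (idx ν : ℤ))) +
      ∑ idx : Fin k → Fin d, (β idx + γ idx * (n : ℂ)) *
        ∏ ν : Fin k, F (a ν * n + (idx ν : ℤ)))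
    (hagree : ∀ n : ℕ, 1 ≤ n → n ≤ 3 * d ^ k → Φ n = Ψ n) :
    ∀ n : ℕ, Φ n = Ψ n := by
  classical
  obtain ⟨α₁, β₁, γ₁, h₁⟩ := hΦ
  obtain ⟨α₂, β₂, γ₂, h₂⟩ := hΨ
  -- the basic expansion of a product of `F`-values as an exponential sum
  have hprod : ∀ (c : Fin k → ℤ) (idx : Fin k → Fin d) (n : ℕ),
      (∏ ν : Fin k, F (c ν * n + (idx ν : ℤ)))
        = ∑ j : Fin k → Fin d,
            (∏ ν, lam (j ν) * r (j ν) ^ (idx ν : ℤ)) * (∏ ν, r (j ν) ^ (c ν)) ^ n := by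
    intro c idx n
    have h1 : ∀ ν : Fin k, F (c ν * n + (idx ν : ℤ))
        = ∑ m : Fin d, (lam m * r m ^ (idx ν : ℤ)) * (r m ^ (c ν)) ^ n := by
      intro ν
      rw [hF]
      refine Finset.sum_congr rfl fun m _ => ?_
      rw [zpow_add₀ (hr0 m), zpow_mul, zpow_natCast]
      ring
    calc (∏ ν : Fin k, F (c ν * n + (idx ν : ℤ)))
        = ∏ ν : Fin k, ∑ m : Fin d,
            (lam m * r m ^ (idx ν : ℤ)) * (r m ^ (c ν)) ^ n :=
          Finset.prod_congr rfl fun ν _ => h1 ν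
      _ = ∑ j : Fin k → Fin d, ∏ ν,
            (lam (j ν) * r (j ν) ^ (idx ν : ℤ)) * (r (j ν) ^ (c ν)) ^ n :=
          Fintype.prod_sum _
      _ = _ := by
          refine Finset.sum_congr rfl fun j _ => ?_
          rw [Finset.prod_mul_distrib, Finset.prod_pow]
  -- representation of a type-(A) sum as an exponential sum
  have hrepr : ∀ (α β γ : (Fin k → Fin d) → ℂ) (n : ℕ),
      ((∑ idx : Fin k → Fin d, α idx *
          ∏ ν : Fin k, F ((a ν + b ν) * n + (idx ν : ℤ))) +
        ∑ idx : Fin k → Fin d, (β idx + γ idx * (n : ℂ)) *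
          ∏ ν : Fin k, F (a ν * n + (idx ν : ℤ)))
      = ∑ j : Fin k → Fin d,
          ((∑ idx : Fin k → Fin d, α idx * ∏ ν, lam (j ν) * r (j ν) ^ (idx ν : ℤ))
              * (∏ ν, r (j ν) ^ (a ν + b ν)) ^ n
          + ((∑ idx : Fin k → Fin d, β idx * ∏ ν, lam (j ν) * r (j ν) ^ (idx ν : ℤ))
              + (∑ idx : Fin k → Fin d, γ idx * ∏ ν, lam (j ν) * r (j ν) ^ (idx ν : ℤ))
                * (n : ℂ))
              * (∏ ν, r (j ν) ^ (a ν)) ^ n) := by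
    intro α β γ n
    simp only [hprod]
    rw [Finset.sum_add_distrib]
    congr 1
    · simp only [Finset.mul_sum]
      rw [Finset.sum_comm]
      refine Finset.sum_congr rfl fun j _ => ?_
      rw [Finset.sum_mul]
      refine Finset.sum_congr rfl fun idx _ => ?_
      ring
    · simp only [Finset.mul_sum]
      rw [Finset.sum_comm]
      refine Finset.sum_congr rfl fun j _ => ?_
      rw [add_mul, Finset.sum_mul, Finset.sum_mul, Finset.sum_mul, ← Finset.sum_add_distrib]
      refine Finset.sum_congr rfl fun idx _ => ?_
      ring
  -- apply the vanishing lemma to `G = Φ - Ψ`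
  have hcard : Fintype.card (Fin k → Fin d) = d ^ k := by
    simp [Fintype.card_fun]
  have main := GWmain (J := Fin k → Fin d) (3 * d ^ k)
    (by rw [hcard]; ring)
    (fun j => ∏ ν, r (j ν) ^ (a ν + b ν)) (fun j => ∏ ν, r (j ν) ^ (a ν))
    (fun j => Finset.prod_ne_zero_iff.2 fun ν _ => zpow_ne_zero _ (hr0 _))
    (fun j => Finset.prod_ne_zero_iff.2 fun ν _ => zpow_ne_zero _ (hr0 _))
    (fun j => ∑ idx : Fin k → Fin d,
      (α₁ idx - α₂ idx) * ∏ ν, lam (j ν) * r (j ν) ^ (idx ν : ℤ))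
    (fun j => ∑ idx : Fin k → Fin d,
      (β₁ idx - β₂ idx) * ∏ ν, lam (j ν) * r (j ν) ^ (idx ν : ℤ))
    (fun j => ∑ idx : Fin k → Fin d,
      (γ₁ idx - γ₂ idx) * ∏ ν, lam (j ν) * r (j ν) ^ (idx ν : ℤ))
    (fun n => Φ n - Ψ n)
    (by
      intro n
      rw [h₁ n, h₂ n, hrepr α₁ β₁ γ₁ n, hrepr α₂ β₂ γ₂ n, ← Finset.sum_sub_distrib]
      refine Finset.sum_congr rfl fun j _ => ?_
      simp only [sub_mul, Finset.sum_sub_distrib]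
      ring)
    (fun n h1 h2 => sub_eq_zero_of_eq (hagree n h1 h2))
  exact fun n => sub_eq_zero.mp (main n)
end

section
/- Let d ≥ 1 and p ≥ 1, and let r_1,…,r_d be pairwise distinct nonzero complex numbers such that no product r_{i_1} r_{i_2} ⋯ r_{i_p} (with 1 ≤ i_1,…,i_p ≤ d) equals 1. Then there exist complex numbers Λ_{i_1,…,i_p}, indexed by tuples (i_1,…,i_p) with 0 ≤ i_t ≤ d−1, depending only on r_1,…,r_d and p, such that: for every choice of complex numbers λ_1,…,λ_d, setting F(n) = Σ_{m=1}^{d} λ_m r_m^n, there is a constant K ∈ ℂ with Σ_{j=0}^{n−1} F(j)^p = Σ_{i_1,…,i_p} Λ_{i_1,…,i_p} F(n+i_1) F(n+i_2) ⋯ F(n+i_p) + K for all n ≥ 0. In particular, the coefficients Λ do not depend on the initial values F(0),…,F(d−1) of the sequence. -/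
open Matrix Kronecker in
lemma det_tensor_pow {d : ℕ} (p : ℕ) (V : Matrix (Fin d) (Fin d) ℂ) (hV : V.det ≠ 0) :
    (Matrix.of (fun g h : Fin p → Fin d => ∏ t, V (g t) (h t))).det ≠ 0 := by
  induction p with
  | zero =>
    rw [Matrix.det_unique]
    simp
  | succ p ih =>
    let e : Fin d × (Fin p → Fin d) ≃ (Fin (p+1) → Fin d) := Fin.consEquiv (fun _ => Fin d)
    have hM : (Matrix.of (fun g h : Fin (p+1) → Fin d => ∏ t, V (g t) (h t)))
        = Matrix.reindex e e
          (V ⊗ₖ (Matrix.of (fun g h : Fin p → Fin d => ∏ t, V (g t) (h t)))) := by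
      ext g h
      simp [Matrix.reindex_apply, Matrix.kroneckerMap_apply, e, Fin.consEquiv,
        Fin.prod_univ_succ, Fin.tail]
    rw [hM, Matrix.det_reindex_self, Matrix.det_kronecker]
    exact mul_ne_zero (pow_ne_zero _ hV) (pow_ne_zero _ ih)

/-- **Theorem 4** of Greene–Wilf: for power sums of a C-finite sequence with
distinct roots, when no degree-`p` monomial in the roots equals `1`, the
coefficients of the closed form are independent of the initial conditions. -/
theorem power_sum_independence_thm4
    (d p : ℕ) (hd : 1 ≤ d) (hp : 1 ≤ p)
    (r : Fin d → ℂ) (hr_inj : Function.Injective r) (hr0 : ∀ m, r m ≠ 0)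
    (hprod : ∀ g : Fin p → Fin d, ∏ t : Fin p, r (g t) ≠ 1) :
    ∃ Λ : (Fin p → Fin d) → ℂ,
      ∀ lam : Fin d → ℂ, ∀ F : ℕ → ℂ,
        (∀ n : ℕ, F n = ∑ m : Fin d, lam m * r m ^ n) →
        ∃ K : ℂ, ∀ n : ℕ,
          ∑ j ∈ Finset.range n, F j ^ p
            = (∑ idx : Fin p → Fin d, Λ idx * ∏ t : Fin p, F (n + (idx t : ℕ))) + K := by
  classical
  set ρ : (Fin p → Fin d) → ℂ := fun g => ∏ t, r (g t) with hρ
  set W : Matrix (Fin p → Fin d) (Fin p → Fin d) ℂ :=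
    Matrix.of (fun g h : Fin p → Fin d => ∏ t, (Matrix.vandermonde r) (g t) (h t)) with hW
  have hWdet : W.det ≠ 0 :=
    det_tensor_pow p _ (Matrix.det_vandermonde_ne_zero_iff.mpr hr_inj)
  set b : (Fin p → Fin d) → ℂ := fun g => (ρ g - 1)⁻¹ with hb
  set Λ : (Fin p → Fin d) → ℂ := W⁻¹.mulVec b with hΛ
  have hsolve : ∀ g, ∑ idx, W g idx * Λ idx = b g := by
    intro g
    have : W.mulVec Λ = b := by
      rw [hΛ, Matrix.mulVec_mulVec, Matrix.mul_nonsing_inv _ (isUnit_iff_ne_zero.mpr hWdet),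
        Matrix.one_mulVec]
    exact congrFun this g
  refine ⟨Λ, fun lam F hF => ?_⟩
  refine ⟨-∑ g : Fin p → Fin d, (∏ t, lam (g t)) * b g, fun n => ?_⟩
  have hρ1 : ∀ g : Fin p → Fin d, ρ g - 1 ≠ 0 := fun g => sub_ne_zero.mpr (hprod g)
  -- expand F as a sum and a power as a product
  have hFpow : ∀ (j : ℕ), F j ^ p = ∑ g : Fin p → Fin d, ∏ t, (lam (g t) * r (g t) ^ j) := by
    intro j
    have h1 : F j ^ p = ∏ _t : Fin p, F j := by simp
    rw [h1]
    calc ∏ _t : Fin p, F j = ∏ t : Fin p, ∑ m : Fin d, lam m * r m ^ j := by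
          simp only [hF j]
      _ = _ := Fintype.prod_sum _
  have hprodF : ∀ (n : ℕ) (idx : Fin p → Fin d),
      ∏ t, F (n + (idx t : ℕ))
        = ∑ g : Fin p → Fin d, ∏ t, (lam (g t) * r (g t) ^ (n + (idx t : ℕ))) := by
    intro n idx
    calc ∏ t : Fin p, F (n + (idx t : ℕ))
        = ∏ t : Fin p, ∑ m : Fin d, lam m * r m ^ (n + (idx t : ℕ)) := by
          simp only [hF]
      _ = _ := Fintype.prod_sum _
  -- left side
  have hL : ∑ j ∈ Finset.range n, F j ^ p
      = ∑ g : Fin p → Fin d, (∏ t, lam (g t)) * ((ρ g ^ n - 1) / (ρ g - 1)) := by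
    calc ∑ j ∈ Finset.range n, F j ^ p
        = ∑ j ∈ Finset.range n, ∑ g : Fin p → Fin d, (∏ t, lam (g t)) * ρ g ^ j := by
          refine Finset.sum_congr rfl fun j _ => ?_
          rw [hFpow j]
          refine Finset.sum_congr rfl fun g _ => ?_
          rw [Finset.prod_mul_distrib, Finset.prod_pow]
      _ = ∑ g : Fin p → Fin d, (∏ t, lam (g t)) * ∑ j ∈ Finset.range n, ρ g ^ j := by
          rw [Finset.sum_comm]
          exact Finset.sum_congr rfl fun g _ => (Finset.mul_sum _ _ _).symm
      _ = _ := by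
          refine Finset.sum_congr rfl fun g _ => ?_
          rw [geom_sum_eq (hprod g)]
  -- right side
  have hR : ∑ idx : Fin p → Fin d, Λ idx * ∏ t, F (n + (idx t : ℕ))
      = ∑ g : Fin p → Fin d, (∏ t, lam (g t)) * (ρ g ^ n * b g) := by
    calc ∑ idx : Fin p → Fin d, Λ idx * ∏ t, F (n + (idx t : ℕ))
        = ∑ idx : Fin p → Fin d, ∑ g : Fin p → Fin d,
            (∏ t, lam (g t)) * ρ g ^ n * (W g idx * Λ idx) := by
          refine Finset.sum_congr rfl fun idx _ => ?_
          rw [hprodF n idx, Finset.mul_sum]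
          refine Finset.sum_congr rfl fun g _ => ?_
          have : ∏ t, (lam (g t) * r (g t) ^ (n + (idx t : ℕ)))
              = (∏ t, lam (g t)) * ρ g ^ n * W g idx := by
            rw [hW]
            simp only [Matrix.of_apply, Matrix.vandermonde_apply, hρ]
            rw [← Finset.prod_pow, ← Finset.prod_mul_distrib, ← Finset.prod_mul_distrib]
            refine Finset.prod_congr rfl fun t _ => ?_
            rw [pow_add]
            ring
          rw [this]; ring
      _ = ∑ g : Fin p → Fin d, (∏ t, lam (g t)) * ρ g ^ n * ∑ idx, W g idx * Λ idx := by
          rw [Finset.sum_comm]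
          exact Finset.sum_congr rfl fun g _ => (Finset.mul_sum _ _ _).symm
      _ = _ := by
          refine Finset.sum_congr rfl fun g _ => ?_
          rw [hsolve g]; ring
  rw [hL, hR, ← Finset.sum_neg_distrib, ← Finset.sum_add_distrib]
  refine Finset.sum_congr rfl fun g _ => ?_
  rw [hb]
  field_simp [hρ1 g]
  ring
end

section
/- Let F : ℕ → ℂ denote the Fibonacci numbers, F(0)=0, F(1)=1, F(n+2)=F(n+1)+F(n). For every integer p ≥ 1, the ℂ-linear subspace of the space of functions ℕ → ℂ spanned by the p+1 functions n ↦ F(n)^i F(n+1)^{p−i} for i = 0, 1, …, p has dimension exactly p+1. -/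
lemma fib_det (d n : ℕ) :
    (Nat.fib (n + d) : ℤ) * Nat.fib (n + 1) - Nat.fib n * Nat.fib (n + d + 1)
      = (-1) ^ n * Nat.fib d := by
  induction n with
  | zero => simp
  | succ n ih =>
    have h1 : (Nat.fib (n + 1 + d) : ℤ) = Nat.fib (n + d + 1) := by ring_nf
    have h2 : (Nat.fib (n + d + 2) : ℤ) = Nat.fib (n + d + 1) + Nat.fib (n + d) := by
      push_cast [Nat.fib_add_two]; ring
    have h3 : (Nat.fib (n + 2) : ℤ) = Nat.fib (n + 1) + Nat.fib n := by
      push_cast [Nat.fib_add_two]; ring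
    have : (Nat.fib (n + 1 + d) : ℤ) * Nat.fib (n + 2) - Nat.fib (n+1) * Nat.fib (n + 1 + d + 1)
        = -((Nat.fib (n + d) : ℤ) * Nat.fib (n + 1) - Nat.fib n * Nat.fib (n + d + 1)) := by
      have h4 : n + 1 + d + 1 = n + d + 2 := by ring
      rw [h1, h4, h2, h3]; ring
    rw [this, ih]; ring

lemma ratio_inj : Function.Injective
    (fun n : ℕ => (Nat.fib n : ℂ) / (Nat.fib (n + 1) : ℂ)) := by
  have hfib : ∀ n : ℕ, (Nat.fib (n + 1) : ℂ) ≠ 0 := by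
    intro n
    exact_mod_cast Nat.cast_ne_zero.mpr (Nat.fib_pos.mpr (Nat.succ_pos n)).ne'
  have key : ∀ m n : ℕ, n < m →
      (Nat.fib m : ℂ) / (Nat.fib (m + 1) : ℂ) ≠ (Nat.fib n : ℂ) / (Nat.fib (n + 1) : ℂ) := by
    intro m n hlt heq
    rw [div_eq_div_iff (hfib m) (hfib n)] at heq
    have hN : Nat.fib m * Nat.fib (n + 1) = Nat.fib n * Nat.fib (m + 1) := by
      exact_mod_cast heq
    have hd := fib_det (m - n) n
    rw [Nat.add_sub_cancel' hlt.le] at hd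
    have hz : ((-1 : ℤ)) ^ n * Nat.fib (m - n) = 0 := by
      rw [← hd]
      have : ((Nat.fib m : ℤ)) * Nat.fib (n + 1) = Nat.fib n * Nat.fib (m + 1) := by
        exact_mod_cast hN
      omega
    have h5 : (Nat.fib (m - n) : ℤ) = 0 :=
      (mul_eq_zero.mp hz).resolve_left (pow_ne_zero _ (by norm_num))
    have h6 : Nat.fib (m - n) = 0 := by exact_mod_cast h5
    exact (Nat.fib_pos.mpr (Nat.sub_pos_of_lt hlt)).ne' h6
  intro m n h
  rcases lt_trichotomy m n with h' | h' | h'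
  · exact absurd h.symm (key n m h')
  · exact h'
  · exact absurd h (key m n h')

/-- Part (1) of **Theorem 5** of Greene–Wilf: the span of the Fibonacci
monomials `F(n)^i F(n+1)^(p-i)`, `0 ≤ i ≤ p`, has dimension `p + 1`. -/
theorem fib_monomials_span_dim (p : ℕ) (hp : 1 ≤ p) :
    Module.finrank ℂ ↥(Submodule.span ℂ (Set.range (fun i : Fin (p + 1) =>
      fun n : ℕ => (Nat.fib n : ℂ) ^ (i : ℕ) * (Nat.fib (n + 1) : ℂ) ^ (p - (i : ℕ)))))
      = p + 1 := by
  have hfib : ∀ n : ℕ, (Nat.fib (n + 1) : ℂ) ≠ 0 := by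
    intro n
    exact_mod_cast Nat.cast_ne_zero.mpr (Nat.fib_pos.mpr (Nat.succ_pos n)).ne'
  have hli : LinearIndependent ℂ (fun i : Fin (p + 1) =>
      fun n : ℕ => (Nat.fib n : ℂ) ^ (i : ℕ) * (Nat.fib (n + 1) : ℂ) ^ (p - (i : ℕ))) := by
    rw [Fintype.linearIndependent_iff]
    intro c hc
    set P : Polynomial ℂ := ∑ i : Fin (p + 1), Polynomial.monomial (i : ℕ) (c i) with hP
    have hdeg : P.natDegree < p + 1 := by
      apply Nat.lt_succ_of_le
      apply Polynomial.natDegree_sum_le_of_forall_le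
      intro i _
      exact (Polynomial.natDegree_monomial_le _).trans (Nat.lt_succ_iff.mp i.2)
    have heval : ∀ n : Fin (p + 1),
        P.eval ((Nat.fib (n : ℕ) : ℂ) / (Nat.fib ((n : ℕ) + 1) : ℂ)) = 0 := by
      intro n
      have h0 := congrFun hc (n : ℕ)
      simp only [Finset.sum_apply, Pi.smul_apply, smul_eq_mul, Pi.zero_apply] at h0
      have hne : ((Nat.fib ((n : ℕ) + 1) : ℂ)) ^ p ≠ 0 := pow_ne_zero _ (hfib _)
      have hterm : ∀ i : Fin (p + 1),
          ((Nat.fib (n : ℕ) : ℂ) / (Nat.fib ((n : ℕ) + 1) : ℂ)) ^ (i : ℕ)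
            * (Nat.fib ((n : ℕ) + 1) : ℂ) ^ p
          = (Nat.fib (n : ℕ) : ℂ) ^ (i : ℕ) * (Nat.fib ((n : ℕ) + 1) : ℂ) ^ (p - (i : ℕ)) := by
        intro i
        rw [div_pow, div_mul_eq_mul_div, div_eq_iff (pow_ne_zero _ (hfib _)),
          mul_assoc, ← pow_add, Nat.sub_add_cancel (Nat.lt_succ_iff.mp i.2)]
      have hmul : P.eval ((Nat.fib (n : ℕ) : ℂ) / (Nat.fib ((n : ℕ) + 1) : ℂ))
          * (Nat.fib ((n : ℕ) + 1) : ℂ) ^ p = 0 := by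
        rw [hP, Polynomial.eval_finset_sum, Finset.sum_mul, ← h0]
        refine Finset.sum_congr rfl fun i _ => ?_
        rw [Polynomial.eval_monomial, mul_assoc, hterm i]
      exact (mul_eq_zero.mp hmul).resolve_right hne
    have hPz : P = 0 := by
      apply Polynomial.eq_zero_of_natDegree_lt_card_of_eval_eq_zero P
        (fun a b h => Fin.val_injective (ratio_inj h)) heval
      simpa using hdeg
    intro i
    have := congrArg (fun q => Polynomial.coeff q (i : ℕ)) hPz
    simp only [hP, Polynomial.finset_sum_coeff, Polynomial.coeff_monomial,
      Polynomial.coeff_zero] at this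
    rwa [Finset.sum_eq_single i (by
        intro j _ hj
        rw [if_neg (fun h => hj (Fin.val_injective h))]) (by simp), if_pos rfl] at this
  rw [finrank_span_eq_card hli, Fintype.card_fin]
end

section
/- Let F : ℕ → ℂ denote the Fibonacci numbers, F(0)=0, F(1)=1, F(n+2)=F(n+1)+F(n). For every integer p ≥ 1, the ℂ-linear subspace of the space of functions ℕ → ℂ spanned by the functions n ↦ F(n)^i F(n+1)^{p−i} for i = 0, 1, …, p together with the two functions n ↦ n and n ↦ 1 has dimension p+2 if p is divisible by 4, and dimension p+3 otherwise. -/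
open Polynomial Submodule Finset

namespace GW

noncomputable def ga : ℝ := (1 + Real.sqrt 5) / 2
noncomputable def gb : ℝ := (1 - Real.sqrt 5) / 2

lemma s5_sq : Real.sqrt 5 ^ 2 = 5 := Real.sq_sqrt (by norm_num)
lemma s5_pos : 0 < Real.sqrt 5 := Real.sqrt_pos.mpr (by norm_num)
lemma s5_gt : 2 < Real.sqrt 5 := by
  nlinarith [s5_sq, s5_pos]

lemma ga_gt_one : 1 < ga := by unfold ga; nlinarith [s5_gt]
lemma ga_pos : 0 < ga := lt_trans one_pos ga_gt_one
lemma ga_mul_gb : ga * gb = -1 := by unfold ga gb; nlinarith [s5_sq]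
lemma gb_eq : gb = -ga⁻¹ := by
  have h := ga_mul_gb
  have h0 : ga ≠ 0 := ne_of_gt ga_pos
  field_simp
  linear_combination h
lemma abs_gb : |gb| = ga⁻¹ := by
  rw [gb_eq, abs_neg, abs_inv, abs_of_pos ga_pos]

noncomputable def φ : ℂ := (ga : ℝ)
noncomputable def ψ : ℂ := (gb : ℝ)

lemma phi_add_psi : φ + ψ = 1 := by
  have h : ga + gb = 1 := by unfold ga gb; ring
  unfold φ ψ; rw [← Complex.ofReal_add, h, Complex.ofReal_one]
lemma phi_mul_psi : φ * ψ = -1 := by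
  unfold φ ψ; rw [← Complex.ofReal_mul, ga_mul_gb]; norm_num
lemma phi_sq : φ ^ 2 = φ + 1 := by
  have h := phi_add_psi; have h2 := phi_mul_psi
  have : ψ = 1 - φ := by linear_combination h
  rw [this] at h2; linear_combination -h2
lemma psi_sq : ψ ^ 2 = ψ + 1 := by
  have h := phi_add_psi; have h2 := phi_mul_psi
  have : φ = 1 - ψ := by linear_combination h
  rw [this] at h2; linear_combination -h2
lemma phi_sub_psi_ne : φ - ψ ≠ 0 := by
  unfold φ ψ
  rw [← Complex.ofReal_sub]
  simp only [ne_eq, Complex.ofReal_eq_zero]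
  unfold ga gb; nlinarith [s5_pos]

noncomputable def fibC : ℕ → ℂ := fun n => (Nat.fib n : ℂ)

lemma phi_pow (n : ℕ) : φ ^ n = fibC (n + 1) - ψ * fibC n := by
  induction n with
  | zero => simp [fibC]
  | succ n ih =>
    have h1 := phi_add_psi; have h2 := phi_mul_psi
    rw [pow_succ, ih]
    show _ = fibC (n + 2) - ψ * fibC (n + 1)
    have hf : fibC (n + 2) = fibC (n + 1) + fibC n := by
      unfold fibC; rw [Nat.fib_add_two]; push_cast; ring
    rw [hf]; linear_combination (fibC (n+1)) * h1 - (fibC n) * h2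

lemma psi_pow (n : ℕ) : ψ ^ n = fibC (n + 1) - φ * fibC n := by
  induction n with
  | zero => simp [fibC]
  | succ n ih =>
    have h1 := phi_add_psi; have h2 := phi_mul_psi
    rw [pow_succ, ih]
    show _ = fibC (n + 2) - φ * fibC (n + 1)
    have hf : fibC (n + 2) = fibC (n + 1) + fibC n := by
      unfold fibC; rw [Nat.fib_add_two]; push_cast; ring
    rw [hf]; linear_combination (fibC (n+1)) * h1 - (fibC n) * h2

lemma binet (n : ℕ) : fibC n = (φ - ψ)⁻¹ * φ ^ n + (-(φ - ψ)⁻¹) * ψ ^ n := by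
  have h1 := phi_pow n; have h2 := psi_pow n
  have h3 : φ ^ n - ψ ^ n = (φ - ψ) * fibC n := by rw [h1, h2]; ring
  linear_combination (-(φ - ψ)⁻¹) * h3 - fibC n * mul_inv_cancel₀ phi_sub_psi_ne

lemma binet' (n : ℕ) : fibC (n + 1) = (φ * (φ - ψ)⁻¹) * φ ^ n + (-(ψ * (φ - ψ)⁻¹)) * ψ ^ n := by
  have h1 := phi_pow n; have h2 := psi_pow n
  have h3 : φ * φ ^ n - ψ * ψ ^ n = (φ - ψ) * fibC (n + 1) := by
    rw [h1, h2]; ring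
  linear_combination (-(φ - ψ)⁻¹) * h3 - fibC (n + 1) * mul_inv_cancel₀ phi_sub_psi_ne


/-- Transfer lemma: span of degree-`p` monomials in `u', v'` is contained in the span of
degree-`p` monomials in `u, v` when `u', v'` are pointwise combinations of `u, v`. -/
lemma span_pow_le (u v u' v' : ℕ → ℂ) (au bu av bv : ℂ)
    (hu : ∀ n, u' n = au * u n + bu * v n) (hv : ∀ n, v' n = av * u n + bv * v n) (p : ℕ) :
    span ℂ (Set.range (fun i : Fin (p + 1) =>
        fun n : ℕ => u' n ^ (i : ℕ) * v' n ^ (p - (i : ℕ)))) ≤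
    span ℂ (Set.range (fun i : Fin (p + 1) =>
        fun n : ℕ => u n ^ (i : ℕ) * v n ^ (p - (i : ℕ)))) := by
  rw [span_le]
  rintro _ ⟨i, rfl⟩
  have hip : (i : ℕ) ≤ p := Nat.lt_succ_iff.mp i.2
  have key : (fun n : ℕ => u' n ^ (i : ℕ) * v' n ^ (p - (i : ℕ))) =
      ∑ s ∈ Finset.range ((i : ℕ) + 1), ∑ t ∈ Finset.range ((p - (i : ℕ)) + 1),
        (((i : ℕ).choose s : ℂ) * ((p - (i : ℕ)).choose t : ℂ) *
          (au ^ s * bu ^ ((i : ℕ) - s) * av ^ t * bv ^ ((p - (i : ℕ)) - t))) •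
          (fun n : ℕ => u n ^ (s + t) * v n ^ (p - (s + t))) := by
    funext n
    rw [hu n, hv n, add_pow, add_pow]
    rw [Finset.sum_apply]
    rw [Finset.sum_mul_sum]
    refine Finset.sum_congr rfl fun s hs => ?_
    rw [Finset.sum_apply]
    refine Finset.sum_congr rfl fun t ht => ?_
    have hs' : s ≤ (i : ℕ) := Nat.lt_succ_iff.mp (Finset.mem_range.mp hs)
    have ht' : t ≤ p - (i : ℕ) := Nat.lt_succ_iff.mp (Finset.mem_range.mp ht)
    have hexp : p - (s + t) = ((i : ℕ) - s) + ((p - (i : ℕ)) - t) := by omega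
    simp only [Pi.smul_apply, smul_eq_mul]
    rw [hexp, pow_add, pow_add, mul_pow, mul_pow]
    ring
  show (fun n : ℕ => u' n ^ (i : ℕ) * v' n ^ (p - (i : ℕ))) ∈ _
  rw [key]
  refine Submodule.sum_mem _ fun s hs => Submodule.sum_mem _ fun t ht => ?_
  have hs' : s ≤ (i : ℕ) := Nat.lt_succ_iff.mp (Finset.mem_range.mp hs)
  have ht' : t ≤ p - (i : ℕ) := Nat.lt_succ_iff.mp (Finset.mem_range.mp ht)
  refine Submodule.smul_mem _ _ (Submodule.subset_span ?_)
  exact ⟨⟨s + t, by omega⟩, rfl⟩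


noncomputable def e (l : ℂ) : ℕ → ℂ := fun n => l ^ n

noncomputable def idf : ℕ → ℂ := fun n => (n : ℂ)

/-- The shift operator. -/
noncomputable def S : (ℕ → ℂ) →ₗ[ℂ] (ℕ → ℂ) where
  toFun f := fun n => f (n + 1)
  map_add' := by intros; rfl
  map_smul' := by intros; rfl

lemma S_apply (f : ℕ → ℂ) (n : ℕ) : S f n = f (n + 1) := rfl

lemma pow_S_apply (k : ℕ) (f : ℕ → ℂ) (n : ℕ) : (S ^ k) f n = f (n + k) := by
  induction k generalizing f n with
  | zero => rfl
  | succ k ih =>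
    rw [pow_succ, Module.End.mul_apply, ih, S_apply]
    exact congrArg f (by omega)

lemma aeval_e (q : ℂ[X]) (l : ℂ) : aeval S q (e l) = q.eval l • e l := by
  induction q using Polynomial.induction_on' with
  | add r s hr hs => rw [map_add, LinearMap.add_apply, hr, hs, eval_add, add_smul]
  | monomial k c =>
    rw [aeval_monomial, eval_monomial]
    have hk : (S ^ k) (e l) = l ^ k • e l := by
      funext n
      rw [pow_S_apply]
      simp [e, pow_add, mul_comm]
    rw [Module.End.mul_apply, hk, map_smul,
      Module.algebraMap_end_apply (R := ℂ) (S := ℂ), smul_smul, mul_comm]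

lemma aeval_e_zero {q : ℂ[X]} {l : ℂ} (h : X - C l ∣ q) : aeval S q (e l) = 0 := by
  rw [aeval_e, (dvd_iff_isRoot.mp h).eq_zero, zero_smul]

lemma S_sub_one_idf : aeval S ((X - C 1 : ℂ[X])) idf = e 1 := by
  rw [map_sub, aeval_X, aeval_C]
  funext n
  rw [LinearMap.sub_apply, Module.algebraMap_end_apply (R := ℂ) (S := ℂ)]
  simp only [S_apply, idf, e, Pi.sub_apply, Pi.smul_apply, smul_eq_mul, one_mul, one_pow]
  push_cast; ring

lemma aeval_idf_zero {q : ℂ[X]} (h : (X - C 1) ^ 2 ∣ q) : aeval S q idf = 0 := by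
  obtain ⟨r, hr⟩ := h
  rw [hr, mul_comm, map_mul, map_pow, Module.End.mul_apply]
  have h2 : ((aeval S ((X - C 1 : ℂ[X]))) ^ 2) idf = 0 := by
    rw [sq, Module.End.mul_apply, S_sub_one_idf]
    exact aeval_e_zero (l := (1:ℂ)) (q := (X - C 1 : ℂ[X])) dvd_rfl
  rw [h2, map_zero]

lemma key (T : Finset ℂ) (c : ℂ → ℂ) (d : ℂ)
    (h : (∑ l ∈ T, c l • e l) + d • idf = 0) :
    (∀ l ∈ T, c l = 0) ∧ d = 0 := by
  -- Step 1: coefficients of non-1 exponentials vanish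
  have step1 : ∀ μ ∈ T, μ ≠ 1 → c μ = 0 := by
    intro μ hμ hμ1
    set Q : ℂ[X] := (∏ l ∈ T.erase μ, (X - C l)) * (X - C 1) ^ 2 with hQ
    have happ : aeval S Q ((∑ l ∈ T, c l • e l) + d • idf) = 0 := by
      rw [h, map_zero]
    rw [map_add, map_smul, aeval_idf_zero ⟨_, mul_comm _ _⟩, smul_zero, add_zero,
      map_sum] at happ
    have hsum : ∀ l ∈ T, (aeval S Q) (c l • e l) =
        (if l = μ then c μ • (Q.eval μ • e μ) else 0) := by
      intro l hl
      by_cases hlμ : l = μ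
      · subst hlμ; rw [if_pos rfl, map_smul, aeval_e]
      · rw [if_neg hlμ, map_smul, aeval_e_zero, smul_zero]
        exact Dvd.dvd.mul_right (Finset.dvd_prod_of_mem _ (Finset.mem_erase.mpr ⟨hlμ, hl⟩)) _
    rw [Finset.sum_congr rfl hsum, Finset.sum_ite_eq' T μ, if_pos hμ] at happ
    have h0 := congrFun happ 0
    simp only [Pi.smul_apply, smul_eq_mul, e, pow_zero, mul_one, Pi.zero_apply] at h0
    have hQne : Q.eval μ ≠ 0 := by
      rw [hQ, eval_mul, eval_pow, eval_sub, eval_X, eval_C, eval_prod]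
      refine mul_ne_zero (Finset.prod_ne_zero_iff.mpr fun l hl => ?_) (pow_ne_zero _ ?_)
      · rw [eval_sub, eval_X, eval_C]
        exact sub_ne_zero.mpr (Ne.symm (Finset.mem_erase.mp hl).1)
      · exact sub_ne_zero.mpr hμ1
    rcases mul_eq_zero.mp h0 with h' | h'
    · exact h'
    · exact absurd h' hQne
  -- Step 2: the value of the sum is constant in n
  have hval : ∀ n : ℕ, (∑ l ∈ T, c l * l ^ n) + d * n = 0 := by
    intro n
    have := congrFun h n
    simpa [e, idf, Finset.sum_apply] using this
  have hconst : ∀ n : ℕ, (∑ l ∈ T, c l * l ^ n) = ∑ l ∈ T, c l := by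
    intro n
    refine Finset.sum_congr rfl fun l hl => ?_
    by_cases hl1 : l = 1
    · subst hl1; simp
    · simp [step1 l hl hl1]
  have h0 := hval 0
  have h1 := hval 1
  rw [hconst] at h0 h1
  have hd : d = 0 := by
    linear_combination h1 - h0
  refine ⟨fun l hl => ?_, hd⟩
  by_cases hl1 : l = 1
  · subst hl1
    have : ∑ x ∈ T, c x = c 1 := by
      refine Finset.sum_eq_single_of_mem 1 hl fun l hlT hne => step1 l hlT hne
    rw [this] at h0
    linear_combination h0
  · exact step1 l hl hl1


noncomputable def Lset (p : ℕ) : Finset ℂ :=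
  (Finset.range (p + 1)).image (fun j => φ ^ j * ψ ^ (p - j))

lemma lam_real (p j : ℕ) : φ ^ j * ψ ^ (p - j) = ((ga ^ j * gb ^ (p - j) : ℝ) : ℂ) := by
  unfold φ ψ; push_cast; ring

lemma ga_aux {m p : ℕ} (hm : m ≤ p) :
    ga ^ m * (ga⁻¹) ^ (p - m) * ga ^ p = ga ^ (2 * m) := by
  have hsplit : ga ^ p = ga ^ (p - m) * ga ^ m := by rw [← pow_add]; congr 1; omega
  have hne : ga ^ (p - m) ≠ 0 := pow_ne_zero _ (ne_of_gt ga_pos)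
  rw [hsplit, inv_pow]
  calc ga ^ m * (ga ^ (p - m))⁻¹ * (ga ^ (p - m) * ga ^ m)
      = ga ^ m * ga ^ m * ((ga ^ (p - m))⁻¹ * ga ^ (p - m)) := by ring
    _ = ga ^ (2 * m) := by rw [inv_mul_cancel₀ hne, mul_one, ← pow_add, two_mul]

lemma ga_pow_inj : Function.Injective (ga ^ · : ℕ → ℝ) :=
  pow_right_injective₀ ga_pos (ne_of_gt ga_gt_one)

lemma lam_injOn (p : ℕ) :
    Set.InjOn (fun j => φ ^ j * ψ ^ (p - j)) ↑(Finset.range (p + 1)) := by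
  intro j hj k hk h
  simp only [Finset.coe_range, Set.mem_Iio] at hj hk
  have hjp : j ≤ p := by omega
  have hkp : k ≤ p := by omega
  simp only [lam_real] at h
  have hr : ga ^ j * gb ^ (p - j) = ga ^ k * gb ^ (p - k) := by exact_mod_cast h
  have habs : ga ^ j * (ga⁻¹) ^ (p - j) = ga ^ k * (ga⁻¹) ^ (p - k) := by
    have := congrArg (|·|) hr
    simpa only [abs_mul, abs_pow, abs_gb, abs_of_pos ga_pos] using this
  have h2 : ga ^ (2 * j) = ga ^ (2 * k) := by
    rw [← ga_aux hjp, ← ga_aux hkp, habs]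
  have := ga_pow_inj h2
  omega

lemma card_Lset (p : ℕ) : (Lset p).card = p + 1 := by
  rw [Lset, Finset.card_image_of_injOn (lam_injOn p), Finset.card_range]

lemma one_mem_Lset (p : ℕ) : (1 : ℂ) ∈ Lset p ↔ 4 ∣ p := by
  constructor
  · intro h
    obtain ⟨j, hj, hlam⟩ := Finset.mem_image.mp h
    have hjp : j ≤ p := by
      have := Finset.mem_range.mp hj; omega
    rw [lam_real] at hlam
    have hr : ga ^ j * gb ^ (p - j) = 1 := by exact_mod_cast hlam
    have habs : ga ^ j * (ga⁻¹) ^ (p - j) = 1 := by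
      have := congrArg (|·|) hr
      simpa only [abs_mul, abs_pow, abs_gb, abs_of_pos ga_pos, abs_one] using this
    have h2 : ga ^ (2 * j) = ga ^ p := by
      rw [← ga_aux hjp, habs, one_mul]
    have h2jp : 2 * j = p := ga_pow_inj h2
    have hpj : p - j = j := by omega
    rw [hpj, ← mul_pow, ga_mul_gb] at hr
    have hje : Even j := by
      rw [neg_one_pow_eq_one_iff_even (by norm_num : (-1 : ℝ) ≠ 1)] at hr
      exact hr
    obtain ⟨m, hm⟩ := hje
    exact ⟨m, by omega⟩
  · rintro ⟨m, rfl⟩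
    refine Finset.mem_image.mpr ⟨2 * m, Finset.mem_range.mpr (by omega), ?_⟩
    have hpm : 4 * m - 2 * m = 2 * m := by omega
    rw [hpm, ← mul_pow, phi_mul_psi]
    exact Even.neg_one_pow (even_two_mul m)

lemma range_exp_eq (p : ℕ) :
    Set.range (fun i : Fin (p + 1) =>
      fun n : ℕ => (φ ^ n) ^ (i : ℕ) * (ψ ^ n) ^ (p - (i : ℕ))) = e '' ↑(Lset p) := by
  ext f
  constructor
  · rintro ⟨i, rfl⟩
    refine ⟨φ ^ (i : ℕ) * ψ ^ (p - (i : ℕ)),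
      Finset.mem_coe.mpr (Finset.mem_image.mpr ⟨(i : ℕ), Finset.mem_range.mpr i.2, rfl⟩), ?_⟩
    funext n
    simp only [e, mul_pow, pow_right_comm]
  · rintro ⟨l, hl, rfl⟩
    obtain ⟨j, hj, rfl⟩ := Finset.mem_image.mp (Finset.mem_coe.mp hl)
    refine ⟨⟨j, Finset.mem_range.mp hj⟩, ?_⟩
    funext n
    simp only [e, mul_pow, pow_right_comm]

end GW

open GW Submodule Polynomial in
/-- Part (2) of **Theorem 5** of Greene–Wilf: the span of the Fibonacci
monomials `F(n)^i F(n+1)^(p-i)`, `0 ≤ i ≤ p`, together with `n` and `1`, has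
dimension `p + 2` when `4 ∣ p` and `p + 3` otherwise. -/
theorem fib_monomials_plus_span_dim (p : ℕ) (hp : 1 ≤ p) :
    Module.finrank ℂ ↥(Submodule.span ℂ
      (Set.range (fun i : Fin (p + 1) =>
        fun n : ℕ => (Nat.fib n : ℂ) ^ (i : ℕ) * (Nat.fib (n + 1) : ℂ) ^ (p - (i : ℕ)))
      ∪ {fun n : ℕ => (n : ℂ), fun _ : ℕ => (1 : ℂ)}))
      = if 4 ∣ p then p + 2 else p + 3 := by
  classical
  set T : Finset ℂ := insert 1 (Lset p) with hT
  set v : Option ↥T → (ℕ → ℂ) := fun o => o.elim idf (fun x => e ↑x) with hv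
  -- linear independence of v
  have hvind : LinearIndependent ℂ v := by
    rw [Fintype.linearIndependent_iff]
    intro g hg
    set c : ℂ → ℂ := fun l => if h : l ∈ T then g (some ⟨l, h⟩) else 0 with hc
    have hsum : (∑ l ∈ T, c l • e l) + g none • idf = 0 := by
      rw [Fintype.sum_option] at hg
      rw [← hg, add_comm]
      congr 1
      rw [← Finset.sum_coe_sort T (fun l => c l • e l)]
      refine Finset.sum_congr rfl fun x _ => ?_
      simp only [hc]
      rw [dif_pos x.2]
      rfl
    obtain ⟨hc0, hg0⟩ := key T c (g none) hsum
    intro o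
    cases o with
    | none => exact hg0
    | some x =>
      have := hc0 ↑x x.2
      rw [hc] at this
      simp only [dif_pos x.2] at this
      exact this
  -- the span of the statement's set equals the span of the range of v
  have hBspan : span ℂ (Set.range (fun i : Fin (p + 1) =>
        fun n : ℕ => (Nat.fib n : ℂ) ^ (i : ℕ) * (Nat.fib (n + 1) : ℂ) ^ (p - (i : ℕ))))
      = span ℂ (e '' ↑(Lset p)) := by
    refine le_antisymm ?_ ?_
    · have h1 := span_pow_le (fun n => φ ^ n) (fun n => ψ ^ n) fibC (fun n => fibC (n + 1))
        ((φ - ψ)⁻¹) (-(φ - ψ)⁻¹) (φ * (φ - ψ)⁻¹) (-(ψ * (φ - ψ)⁻¹))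
        (fun n => binet n) (fun n => binet' n) p
      rw [range_exp_eq p] at h1
      exact h1
    · have h2 := span_pow_le fibC (fun n => fibC (n + 1)) (fun n => φ ^ n) (fun n => ψ ^ n)
        (-ψ) 1 (-φ) 1
        (fun n => by show φ ^ n = -ψ * fibC n + 1 * fibC (n + 1); rw [phi_pow n]; ring)
        (fun n => by show ψ ^ n = -φ * fibC n + 1 * fibC (n + 1); rw [psi_pow n]; ring) p
      rw [range_exp_eq p] at h2
      exact h2
  have hrange_v : Set.range v = (e '' ↑(Lset p)) ∪ {idf, fun _ : ℕ => (1 : ℂ)} := by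
    have hone : (fun _ : ℕ => (1 : ℂ)) = e 1 := by funext n; simp [e]
    ext f
    constructor
    · rintro ⟨o, rfl⟩
      cases o with
      | none => exact Or.inr (Or.inl rfl)
      | some x =>
        have hx : (↑x : ℂ) ∈ insert (1 : ℂ) (Lset p) := x.2
        rcases Finset.mem_insert.mp hx with h1 | h1
        · right; right
          show v (some x) = _
          rw [hone, hv]
          simp only [Option.elim]
          rw [h1]
        · exact Or.inl ⟨↑x, Finset.mem_coe.mpr h1, rfl⟩
    · rintro (⟨l, hl, rfl⟩ | rfl | rfl)
      · exact ⟨some ⟨l, hT ▸ Finset.mem_insert_of_mem (Finset.mem_coe.mp hl)⟩, rfl⟩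
      · exact ⟨none, rfl⟩
      · exact ⟨some ⟨1, hT ▸ Finset.mem_insert_self 1 _⟩, by rw [hone]; rfl⟩
  have hspan_eq : span ℂ
      (Set.range (fun i : Fin (p + 1) =>
        fun n : ℕ => (Nat.fib n : ℂ) ^ (i : ℕ) * (Nat.fib (n + 1) : ℂ) ^ (p - (i : ℕ)))
      ∪ {fun n : ℕ => (n : ℂ), fun _ : ℕ => (1 : ℂ)}) = span ℂ (Set.range v) := by
    have hidf : (fun n : ℕ => (n : ℂ)) = idf := rfl
    rw [hrange_v, span_union, span_union, hBspan, hidf]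
  rw [hspan_eq, finrank_span_eq_card hvind, Fintype.card_option, Fintype.card_coe]
  by_cases h4 : 4 ∣ p
  · rw [if_pos h4, hT, Finset.insert_eq_self.mpr ((one_mem_Lset p).mpr h4), card_Lset]
  · rw [if_neg h4, hT, Finset.card_insert_of_notMem (fun hmem => h4 ((one_mem_Lset p).mp hmem)),
      card_Lset]
end

section
/- Let F : ℕ → ℂ denote the Fibonacci numbers, F(0)=0, F(1)=1, F(n+2)=F(n+1)+F(n), and let p ≥ 1. The family of functions ℕ → ℂ consisting of n ↦ F(n)^i F(n+1)^{p−i} for 0 ≤ i ≤ p together with n ↦ n and n ↦ 1 is linearly independent over ℂ if p is not divisible by 4; if p is divisible by 4, this family is linearly dependent and the space of ℂ-linear relations among its p+3 members is one-dimensional. -/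
noncomputable section FibGW
open Finset Submodule

private def gwα : ℂ := (1 + Real.sqrt 5) / 2
private def gwβ : ℂ := (1 - Real.sqrt 5) / 2

private lemma gw_s5 : ((Real.sqrt 5 : ℝ) : ℂ) ^ 2 = 5 := by
  have h : Real.sqrt 5 ^ 2 = 5 := Real.sq_sqrt (by norm_num)
  exact_mod_cast congrArg (fun x : ℝ => (x : ℂ)) h

private lemma gw_prod : gwα * gwβ = -1 := by
  unfold gwα gwβ
  linear_combination (-(1:ℂ)/4) * gw_s5

private lemma gw_sub : gwα - gwβ = ((Real.sqrt 5 : ℝ) : ℂ) := by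
  unfold gwα gwβ; ring

private lemma gw_sub_ne : gwα - gwβ ≠ 0 := by
  rw [gw_sub]
  exact_mod_cast (Real.sqrt_pos.mpr (by norm_num : (0:ℝ) < 5)).ne'

private lemma gw_alpha_sq : gwα ^ 2 = gwα + 1 := by
  unfold gwα; linear_combination ((1:ℂ)/4) * gw_s5

private lemma gw_beta_sq : gwβ ^ 2 = gwβ + 1 := by
  unfold gwβ; linear_combination ((1:ℂ)/4) * gw_s5

private lemma gw_binet (n : ℕ) : (Nat.fib n : ℂ) * (gwα - gwβ) = gwα ^ n - gwβ ^ n := by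
  induction n using Nat.twoStepInduction with
  | zero => simp
  | one => simp
  | more n ih1 ih2 =>
    rw [Nat.fib_add_two]
    push_cast
    have ha : gwα ^ (n + 2) = gwα ^ (n + 1) + gwα ^ n := by
      have : gwα ^ (n + 2) = gwα ^ n * gwα ^ 2 := by ring
      rw [this, gw_alpha_sq]; ring
    have hb : gwβ ^ (n + 2) = gwβ ^ (n + 1) + gwβ ^ n := by
      have : gwβ ^ (n + 2) = gwβ ^ n * gwβ ^ 2 := by ring
      rw [this, gw_beta_sq]; ring
    linear_combination ih1 + ih2 + ha - hb + (-2*gwα^n) * gw_alpha_sq + (2*gwβ^n) * gw_beta_sq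

private lemma gw_alpha_pow (n : ℕ) :
    gwα ^ n = -gwβ * (Nat.fib n : ℂ) + (Nat.fib (n + 1) : ℂ) := by
  apply mul_right_cancel₀ gw_sub_ne
  linear_combination gwβ * gw_binet n - gw_binet (n + 1)

private lemma gw_beta_pow (n : ℕ) :
    gwβ ^ n = -gwα * (Nat.fib n : ℂ) + (Nat.fib (n + 1) : ℂ) := by
  apply mul_right_cancel₀ gw_sub_ne
  linear_combination gwα * gw_binet n - gw_binet (n + 1)

private lemma gw_abs_gt : (1:ℝ) < ‖gwα‖ := by
  have h5 : (1:ℝ) < Real.sqrt 5 := by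
    rw [show (1:ℝ) = Real.sqrt 1 by simp]
    exact Real.sqrt_lt_sqrt (by norm_num) (by norm_num)
  have : gwα = (((1 + Real.sqrt 5)/2 : ℝ) : ℂ) := by unfold gwα; push_cast; ring
  rw [this, Complex.norm_real, Real.norm_eq_abs, abs_of_pos (by linarith)]
  linarith

private lemma gw_abs_key {p a : ℕ} (ha : a ≤ p) :
    ‖gwα ^ a * gwβ ^ (p - a)‖ * ‖gwα‖ ^ p
      = ‖gwα‖ ^ (2 * a) := by
  have hprod : ‖gwα‖ * ‖gwβ‖ = 1 := by
    rw [← norm_mul, gw_prod]; simp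
  have h1 : ‖gwα‖ ^ p = ‖gwα‖ ^ (p - a) * ‖gwα‖ ^ a := by
    rw [← pow_add]; congr 1; omega
  rw [norm_mul, norm_pow, norm_pow, h1]
  calc ‖gwα‖ ^ a * ‖gwβ‖ ^ (p - a) *
        (‖gwα‖ ^ (p - a) * ‖gwα‖ ^ a)
      = (‖gwα‖ * ‖gwβ‖) ^ (p - a) * ‖gwα‖ ^ (2 * a) := by
        rw [mul_pow, two_mul, pow_add]; ring
    _ = ‖gwα‖ ^ (2 * a) := by rw [hprod, one_pow, one_mul]

private lemma gw_pow_inj {m n : ℕ}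
    (h : ‖gwα‖ ^ m = ‖gwα‖ ^ n) : m = n := by
  by_contra hne
  rcases Nat.lt_or_ge m n with hlt | hge
  · exact absurd h (pow_lt_pow_right₀ gw_abs_gt hlt).ne
  · have hlt : n < m := by omega
    exact absurd h.symm (pow_lt_pow_right₀ gw_abs_gt hlt).ne

private lemma gw_r_inj {p a b : ℕ} (ha : a ≤ p) (hb : b ≤ p)
    (h : gwα ^ a * gwβ ^ (p - a) = gwα ^ b * gwβ ^ (p - b)) : a = b := by
  have habs := congrArg (‖·‖) h
  have h1 : ‖gwα‖ ^ (2 * a) = ‖gwα‖ ^ (2 * b) := by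
    rw [← gw_abs_key ha, ← gw_abs_key hb, habs]
  have := gw_pow_inj h1
  omega

private lemma gw_r_ne_one {p a : ℕ} (ha : a ≤ p) (h2 : 2 * a ≠ p) :
    gwα ^ a * gwβ ^ (p - a) ≠ 1 := by
  intro h
  have habs := congrArg (‖·‖) h
  rw [norm_one] at habs
  have h1 : ‖gwα‖ ^ (2 * a) = ‖gwα‖ ^ p := by
    rw [← gw_abs_key ha, habs, one_mul]
  exact h2 (gw_pow_inj h1)

private lemma gw_r_half {p a : ℕ} (h2 : 2 * a = p) :
    gwα ^ a * gwβ ^ (p - a) = (-1 : ℂ) ^ a := by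
  rw [show p - a = a by omega, ← mul_pow, gw_prod]

private def gwex (z : ℂ) : ℕ → ℂ := fun n => z ^ n

private lemma gw_li_exp {ι : Type} [Fintype ι] {r : ι → ℂ}
    (hr : Function.Injective r) :
    LinearIndependent ℂ (fun a => gwex (r a)) := by
  have hinj : Function.Injective (fun a => powersHom ℂ (r a)) := by
    intro a b h
    apply hr
    have := congrArg (fun f : Multiplicative ℕ →* ℂ => f (Multiplicative.ofAdd 1)) h
    simpa using this
  exact (linearIndependent_monoidHom (Multiplicative ℕ) ℂ).comp
    (fun a => powersHom ℂ (r a)) hinj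

private lemma gw_li_full {ι : Type} [Fintype ι] {r : ι → ℂ}
    (hr : Function.Injective r) (h1 : ∀ a, r a ≠ 1) :
    LinearIndependent ℂ (Sum.elim (fun a : ι => gwex (r a))
      (fun j : Fin 2 => if j = 0 then (fun n : ℕ => (n : ℂ)) else fun _ : ℕ => (1:ℂ))) := by
  rw [Fintype.linearIndependent_iff]
  intro g hg
  have hpt : ∀ n : ℕ, (∑ a, g (Sum.inl a) * r a ^ n)
      + g (Sum.inr 0) * n + g (Sum.inr 1) = 0 := by
    intro n
    have h := congrFun hg n
    simp only [Finset.sum_apply, Fintype.sum_sum_type, Fin.sum_univ_two, Pi.smul_apply,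
      Sum.elim_inl, Sum.elim_inr, smul_eq_mul, gwex, Pi.zero_apply] at h
    norm_num at h
    linear_combination h
  have hd : (∑ a, (g (Sum.inl a) * (r a - 1) ^ 2) • gwex (r a)) = 0 := by
    funext n
    have h0 := hpt n
    have h1' := hpt (n + 1)
    have h2' := hpt (n + 2)
    push_cast at h0 h1' h2'
    simp only [Finset.sum_apply, Pi.smul_apply, smul_eq_mul, gwex, Pi.zero_apply]
    have : ∀ a : ι, g (Sum.inl a) * (r a - 1) ^ 2 * r a ^ n
        = g (Sum.inl a) * r a ^ (n + 2) - 2 * (g (Sum.inl a) * r a ^ (n + 1))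
          + g (Sum.inl a) * r a ^ n := by
      intro a; ring
    rw [Finset.sum_congr rfl fun a _ => this a]
    rw [Finset.sum_add_distrib, Finset.sum_sub_distrib, ← Finset.mul_sum]
    linear_combination h2' - 2 * h1' + h0
  have hz : ∀ a, g (Sum.inl a) * (r a - 1) ^ 2 = 0 :=
    Fintype.linearIndependent_iff.mp (gw_li_exp hr) _ hd
  have hgl : ∀ a, g (Sum.inl a) = 0 := by
    intro a
    rcases mul_eq_zero.mp (hz a) with h | h
    · exact h
    · exact absurd (sub_eq_zero.mp (pow_eq_zero_iff two_ne_zero |>.mp h)) (h1 a)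
  have e0 := hpt 0
  have e1 := hpt 1
  simp only [hgl, zero_mul, Finset.sum_const_zero, Nat.cast_zero, Nat.cast_one] at e0 e1
  intro i
  rcases i with a | j
  · exact hgl a
  · fin_cases j
    · simpa using by linear_combination e1 - e0
    · simpa using by linear_combination e0

private lemma gw_span_mem {X Y : ℕ → ℂ} (u v w z : ℂ) {p i : ℕ} (hi : i ≤ p) :
    (fun n => (u * X n + v * Y n) ^ i * (w * X n + z * Y n) ^ (p - i)) ∈
      Submodule.span ℂ
        (Set.range fun j : Fin (p + 1) => fun n => X n ^ (j : ℕ) * Y n ^ (p - (j : ℕ))) := by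
  have key : (fun n => (u * X n + v * Y n) ^ i * (w * X n + z * Y n) ^ (p - i)) =
      ∑ k ∈ range (i + 1), ∑ l ∈ range (p - i + 1),
        (u ^ k * v ^ (i - k) * w ^ l * z ^ (p - i - l) *
          (i.choose k) * ((p - i).choose l)) •
          (fun n => X n ^ (k + l) * Y n ^ (p - (k + l))) := by
    funext n
    simp only [Finset.sum_apply, Pi.smul_apply, smul_eq_mul]
    rw [add_pow, add_pow, Finset.sum_mul_sum]
    apply Finset.sum_congr rfl
    intro k hk
    apply Finset.sum_congr rfl
    intro l hl
    rw [Finset.mem_range] at hk hl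
    rw [mul_pow, mul_pow, mul_pow, mul_pow]
    have hsplit : p - (k + l) = (i - k) + (p - i - l) := by omega
    rw [hsplit, pow_add]
    ring
  rw [key]
  refine Submodule.sum_mem _ fun k hk => Submodule.sum_mem _ fun l hl => ?_
  rw [Finset.mem_range] at hk hl
  exact Submodule.smul_mem _ _ (Submodule.subset_span ⟨⟨k + l, by omega⟩, rfl⟩)

end FibGW

/-- Corollary to **Theorem 5** of Greene–Wilf: the Fibonacci monomials
`F(n)^i F(n+1)^(p-i)`, `0 ≤ i ≤ p`, together with `n` and `1`, are linearly
independent iff `4 ∤ p`; when `4 ∣ p` the space of linear relations among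
these `p + 3` functions is one-dimensional. -/
theorem fib_monomials_relations (p : ℕ) (hp : 1 ≤ p)
    (G : Fin (p + 1) ⊕ Fin 2 → (ℕ → ℂ))
    (hG : G = Sum.elim
      (fun i : Fin (p + 1) =>
        fun n : ℕ => (Nat.fib n : ℂ) ^ (i : ℕ) * (Nat.fib (n + 1) : ℂ) ^ (p - (i : ℕ)))
      (fun j : Fin 2 => if j = 0 then (fun n : ℕ => (n : ℂ)) else fun _ : ℕ => (1 : ℂ))) :
    (¬ (4 ∣ p) → LinearIndependent ℂ G) ∧
    (4 ∣ p → ∃ c : Fin (p + 1) ⊕ Fin 2 → ℂ, c ≠ 0 ∧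
      (∑ i, c i • G i) = 0 ∧
      ∀ c' : Fin (p + 1) ⊕ Fin 2 → ℂ, (∑ i, c' i • G i) = 0 →
        ∃ t : ℂ, c' = t • c) := by
  subst hG
  set nf : Fin 2 → (ℕ → ℂ) :=
    fun j : Fin 2 => if j = 0 then (fun n : ℕ => (n : ℂ)) else fun _ : ℕ => (1 : ℂ) with hnf
  set Gm : Fin (p + 1) → (ℕ → ℂ) :=
    fun i : Fin (p + 1) =>
      fun n : ℕ => (Nat.fib n : ℂ) ^ (i : ℕ) * (Nat.fib (n + 1) : ℂ) ^ (p - (i : ℕ)) with hGm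
  set r : Fin (p + 1) → ℂ := fun a => gwα ^ (a : ℕ) * gwβ ^ (p - (a : ℕ)) with hr
  have hrinj : Function.Injective r := by
    intro a b h
    exact Fin.ext (gw_r_inj (by omega) (by omega) h)
  -- fib expansions
  have hfib1 : ∀ n : ℕ, (Nat.fib n : ℂ)
      = (gwα - gwβ)⁻¹ * gwα ^ n + (-(gwα - gwβ)⁻¹) * gwβ ^ n := by
    intro n
    have hs := gw_sub_ne
    field_simp
    linear_combination gw_binet n
  have hfib2 : ∀ n : ℕ, (Nat.fib (n + 1) : ℂ)
      = (gwα * (gwα - gwβ)⁻¹) * gwα ^ n + (-(gwβ * (gwα - gwβ)⁻¹)) * gwβ ^ n := by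
    intro n
    have hs := gw_sub_ne
    field_simp
    linear_combination gw_binet (n + 1)
  -- the exponential family written as X^j Y^(p-j)
  have hfam : (fun j : Fin (p + 1) => fun n : ℕ =>
      (gwα ^ n) ^ (j : ℕ) * (gwβ ^ n) ^ (p - (j : ℕ))) = fun j => gwex (r j) := by
    funext j n
    show (gwα ^ n) ^ (j : ℕ) * (gwβ ^ n) ^ (p - (j : ℕ)) = (gwα ^ (j:ℕ) * gwβ ^ (p - (j:ℕ))) ^ n
    rw [mul_pow]
    congr 1 <;> rw [← pow_mul, ← pow_mul, Nat.mul_comm]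
  have hGm_mem : ∀ i : Fin (p + 1),
      Gm i ∈ Submodule.span ℂ (Set.range fun a : Fin (p + 1) => gwex (r a)) := by
    intro i
    have base := gw_span_mem (X := fun n => gwα ^ n) (Y := fun n => gwβ ^ n)
      ((gwα - gwβ)⁻¹) (-(gwα - gwβ)⁻¹) (gwα * (gwα - gwβ)⁻¹) (-(gwβ * (gwα - gwβ)⁻¹))
      (p := p) (i := (i : ℕ)) (by omega)
    rw [hfam] at base
    convert base using 1
    funext n
    rw [hGm]
    simp only
    rw [← hfib1 n, ← hfib2 n]
  have hEGm : ∀ a : Fin (p + 1),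
      gwex (r a) ∈ Submodule.span ℂ (Set.range Gm) := by
    intro a
    have base := gw_span_mem (X := fun n => (Nat.fib n : ℂ)) (Y := fun n => (Nat.fib (n+1) : ℂ))
      (-gwβ) 1 (-gwα) 1 (p := p) (i := (a : ℕ)) (by omega)
    convert base using 1
    funext n
    show (gwα ^ (a:ℕ) * gwβ ^ (p - (a:ℕ))) ^ n = _
    rw [mul_pow, ← pow_mul, ← pow_mul, Nat.mul_comm ((a:ℕ)) n, Nat.mul_comm (p - (a:ℕ)) n,
      pow_mul, pow_mul, gw_alpha_pow, gw_beta_pow]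
    ring_nf
  constructor
  · -- independence when ¬ 4 ∣ p
    intro hnd
    have hne1 : ∀ a : Fin (p + 1), r a ≠ 1 := by
      intro a
      by_cases h2 : 2 * (a : ℕ) = p
      · show gwα ^ (a : ℕ) * gwβ ^ (p - (a : ℕ)) ≠ 1
        rw [gw_r_half h2]
        have hodd : Odd (a : ℕ) := by
          rcases Nat.even_or_odd (a : ℕ) with he | ho
          · obtain ⟨k, hk⟩ := he
            exact absurd ⟨k, by omega⟩ hnd
          · exact ho
        rw [hodd.neg_one_pow]
        norm_num
      · exact gw_r_ne_one (by omega) h2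
    have hE := gw_li_full hrinj hne1
    rw [linearIndependent_iff_card_eq_finrank_span]
    rw [linearIndependent_iff_card_eq_finrank_span] at hE
    have hspan : Submodule.span ℂ (Set.range (Sum.elim Gm nf))
        = Submodule.span ℂ (Set.range (Sum.elim (fun a => gwex (r a)) nf)) := by
      apply le_antisymm <;> rw [Submodule.span_le] <;> rintro _ ⟨i, rfl⟩
      · rcases i with i | j
        · refine Submodule.span_mono ?_ (hGm_mem i)
          rintro _ ⟨a, rfl⟩
          exact ⟨Sum.inl a, rfl⟩
        · exact Submodule.subset_span ⟨Sum.inr j, rfl⟩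
      · rcases i with a | j
        · refine Submodule.span_mono ?_ (hEGm a)
          rintro _ ⟨i, rfl⟩
          exact ⟨Sum.inl i, rfl⟩
        · exact Submodule.subset_span ⟨Sum.inr j, rfl⟩
    rw [hE]
    unfold Set.finrank
    rw [hspan]
  · -- dependence when 4 ∣ p
    intro hd
    have hpe : 2 * (p / 2) = p := by omega
    set a₀ : Fin (p + 1) := ⟨p / 2, by omega⟩ with ha₀
    have hra₀ : r a₀ = 1 := by
      show gwα ^ ((a₀ : Fin (p+1)) : ℕ) * gwβ ^ (p - ((a₀ : Fin (p+1)) : ℕ)) = 1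
      have hv : ((a₀ : Fin (p+1)) : ℕ) = p / 2 := rfl
      rw [hv, gw_r_half hpe]
      exact Even.neg_one_pow ⟨p / 4, by omega⟩
    have hone : gwex (r a₀) = (fun _ : ℕ => (1 : ℂ)) := by
      rw [hra₀]; funext n; simp [gwex]
    obtain ⟨c₀, hc₀⟩ := Submodule.mem_span_range_iff_exists_fun ℂ |>.mp (hEGm a₀)
    rw [hone] at hc₀
    refine ⟨Sum.elim c₀ (fun j => if j = 0 then 0 else -1), ?_, ?_, ?_⟩
    · intro h
      have := congrFun h (Sum.inr 1)
      norm_num at this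
    · rw [Fintype.sum_sum_type, Fin.sum_univ_two]
      simp only [Sum.elim_inl, Sum.elim_inr]
      rw [hc₀]
      funext n
      simp [hnf]
    · -- uniqueness via dimension count
      intro c' hc'
      set Φ := Fintype.linearCombination ℂ (Sum.elim Gm nf) with hΦ
      have hmemc' : c' ∈ LinearMap.ker Φ := by
        rw [LinearMap.mem_ker, hΦ, Fintype.linearCombination_apply]
        exact hc'
      have hmemc : (Sum.elim c₀ (fun j : Fin 2 => if j = 0 then 0 else -1) : _ → ℂ)
          ∈ LinearMap.ker Φ := by
        rw [LinearMap.mem_ker, hΦ, Fintype.linearCombination_apply]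
        rw [Fintype.sum_sum_type, Fin.sum_univ_two]
        simp only [Sum.elim_inl, Sum.elim_inr]
        rw [hc₀]
        funext n
        simp [hnf]
      -- rank of Φ is p + 2
      have hne1' : ∀ a : {a : Fin (p + 1) // a ≠ a₀}, r a.1 ≠ 1 := by
        intro a
        have h2 : 2 * ((a.1 : Fin (p+1)) : ℕ) ≠ p := by
          intro h
          apply a.2
          apply Fin.ext
          have hv : ((a₀ : Fin (p+1)) : ℕ) = p / 2 := rfl
          omega
        exact gw_r_ne_one (by omega) h2
      have hinj' : Function.Injective (fun a : {a : Fin (p + 1) // a ≠ a₀} => r a.1) := by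
        intro a b h
        exact Subtype.ext (hrinj h)
      have hE' := gw_li_full hinj' hne1'
      have hspan' : Submodule.span ℂ (Set.range (Sum.elim Gm nf))
          = Submodule.span ℂ (Set.range (Sum.elim
            (fun a : {a : Fin (p + 1) // a ≠ a₀} => gwex (r a.1)) nf)) := by
        apply le_antisymm <;> rw [Submodule.span_le] <;> rintro _ ⟨i, rfl⟩
        · rcases i with i | j
          · refine Submodule.span_le.mpr ?_ (hGm_mem i)
            rintro _ ⟨a, rfl⟩
            by_cases ha : a = a₀
            · subst ha
              refine Submodule.subset_span ⟨Sum.inr 1, ?_⟩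
              show nf 1 = gwex (r a₀)
              rw [hone]
              simp [hnf]
            · exact Submodule.subset_span ⟨Sum.inl ⟨a, ha⟩, rfl⟩
          · exact Submodule.subset_span ⟨Sum.inr j, rfl⟩
        · rcases i with a | j
          · refine Submodule.span_mono ?_ (hEGm a.1)
            rintro _ ⟨i, rfl⟩
            exact ⟨Sum.inl i, rfl⟩
          · exact Submodule.subset_span ⟨Sum.inr j, rfl⟩
      have hrank : Module.finrank ℂ (LinearMap.range Φ) = p + 2 := by
        rw [hΦ, Fintype.range_linearCombination, hspan', finrank_span_eq_card hE']
        simp only [Fintype.card_sum, Fintype.card_fin]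
        rw [Fintype.card_subtype_compl]
        simp [Fintype.card_subtype_eq]
      have hker : Module.finrank ℂ (LinearMap.ker Φ) = 1 := by
        have hrn := LinearMap.finrank_range_add_finrank_ker Φ
        rw [hrank, Module.finrank_fintype_fun_eq_card] at hrn
        simp only [Fintype.card_sum, Fintype.card_fin] at hrn
        omega
      have hvne : (⟨_, hmemc⟩ : LinearMap.ker Φ) ≠ 0 := by
        intro h
        have h2 := congrFun (congrArg Subtype.val h) (Sum.inr 1)
        norm_num at h2
      obtain ⟨t, ht⟩ := (finrank_eq_one_iff_of_nonzero' _ hvne).mp hker ⟨c', hmemc'⟩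
      refine ⟨t, ?_⟩
      have h2 := congrArg Subtype.val ht
      simpa using h2.symm
end

section
/- Let F : ℕ → ℂ be given by F(n) = Σ_{m=1}^{d} λ_m r_m^n, where r_1,…,r_d are pairwise distinct nonzero complex numbers and every λ_m ≠ 0, and let p and q be distinct positive integers. Let W_p be the ℂ-span, inside the functions ℕ → ℂ, of the functions n ↦ F(n)^{i_1} F(n+1)^{i_2} ⋯ F(n+d−1)^{i_d} over all tuples of nonnegative integers with i_1+⋯+i_d = p; let W_q^+ be the span of the functions n ↦ F(n)^{i_1} ⋯ F(n+d−1)^{i_d} and n ↦ n·F(n)^{i_1} ⋯ F(n+d−1)^{i_d} over all tuples with i_1+⋯+i_d = q; and let W_{p,q}^{++} = W_p + W_q^+. Define S_p = {r_1^{i_1} r_2^{i_2} ⋯ r_d^{i_d} : i_1+⋯+i_d = p} ⊆ ℂ and S_q = {r_1^{i_1} ⋯ r_d^{i_d} : i_1+⋯+i_d = q} ⊆ ℂ (as sets of complex numbers). Then dim W_p = |S_p|, dim W_q^+ = 2|S_q|, and dim W_{p,q}^{++} = |S_p| + 2|S_q| − |S_p ∩ S_q|. -/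
open Module Submodule Set Function

noncomputable section

namespace GWdim

/-- The shift operator on sequences. -/
def shiftE : Module.End ℂ (ℕ → ℂ) where
  toFun f := fun n => f (n + 1)
  map_add' f g := rfl
  map_smul' c f := rfl

def ef (z : ℂ) : ℕ → ℂ := fun n => z ^ n
def nef (z : ℂ) : ℕ → ℂ := fun n => (n : ℂ) * z ^ n

lemma shift_apply (z : ℂ) (f : ℕ → ℂ) (n : ℕ) :
    ((shiftE - z • 1) f) n = f (n + 1) - z * f n := rfl

lemma ef_shift (z : ℂ) : (shiftE - z • 1) (ef z) = 0 := by
  funext n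
  simp only [shift_apply, ef, Pi.zero_apply, pow_succ]
  ring

lemma nef_shift (z : ℂ) : (shiftE - z • 1) (nef z) = z • ef z := by
  funext n
  simp only [shift_apply, nef, ef, Pi.smul_apply, smul_eq_mul]
  push_cast
  rw [pow_succ]
  ring

lemma ef_mem (z : ℂ) : ef z ∈ Module.End.genEigenspace shiftE z 2 := by
  rw [Module.End.mem_genEigenspace]
  exact ⟨1, by norm_num, by rw [LinearMap.mem_ker, pow_one, ef_shift]⟩

lemma nef_mem (z : ℂ) : nef z ∈ Module.End.genEigenspace shiftE z 2 := by
  rw [Module.End.mem_genEigenspace]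
  refine ⟨2, le_rfl, ?_⟩
  rw [LinearMap.mem_ker, pow_two, Module.End.mul_apply, nef_shift, map_smul, ef_shift, smul_zero]

/-- the basic family of exponential-type sequences -/
def w (t : {z : ℂ // z ≠ 0} × Fin 2) : ℕ → ℂ :=
  fun n => (n : ℂ) ^ (t.2 : ℕ) * (t.1 : ℂ) ^ n

lemma w_zero (z : {z : ℂ // z ≠ 0}) : w (z, 0) = ef (z : ℂ) := by
  funext n; simp [w, ef]

lemma w_one (z : {z : ℂ // z ≠ 0}) : w (z, 1) = nef (z : ℂ) := by
  funext n; simp [w, nef]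

lemma fin2 : ∀ j : Fin 2, j = 0 ∨ j = 1 := by decide

lemma w_mem (z : {z : ℂ // z ≠ 0}) (j : Fin 2) :
    w (z, j) ∈ Module.End.genEigenspace shiftE (z : ℂ) 2 := by
  rcases fin2 j with rfl | rfl
  · rw [w_zero]; exact ef_mem _
  · rw [w_one]; exact nef_mem _

lemma li_w : LinearIndependent ℂ w := by
  classical
  rw [linearIndependent_iff']
  intro s g hsum t ht
  set p : {z : ℂ // z ≠ 0} → Submodule ℂ (ℕ → ℂ) :=
    fun z => Module.End.genEigenspace shiftE (z : ℂ) 2 with hp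
  have hmem : ∀ x : {z : ℂ // z ≠ 0} × Fin 2, w x ∈ p x.1 := fun x => w_mem x.1 x.2
  have hindep : iSupIndep p :=
    (Module.End.independent_genEigenspace shiftE 2).comp Subtype.coe_injective
  set Z : Finset {z : ℂ // z ≠ 0} := s.image Prod.fst with hZ
  set u : {z : ℂ // z ≠ 0} → (ℕ → ℂ) :=
    fun z => ∑ x ∈ s.filter (fun x => x.1 = z), g x • w x with hu
  have humem : ∀ z, u z ∈ p z := by
    intro z
    apply Submodule.sum_mem
    rintro x hx
    rw [Finset.mem_filter] at hx
    have := hmem x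
    rw [hx.2] at this
    exact Submodule.smul_mem _ _ this
  have hsumZ : ∑ z ∈ Z, u z = 0 := by
    rw [hu, hZ]
    rw [Finset.sum_fiberwise_of_maps_to (fun x hx => Finset.mem_image_of_mem Prod.fst hx)]
    exact hsum
  have huz : ∀ z ∈ Z, u z = 0 := by
    intro z hz
    have h1 : u z ∈ p z := humem z
    have h2 : u z ∈ ⨆ (j) (_ : j ≠ z), p j := by
      have h3 : u z + ∑ z' ∈ Z.erase z, u z' = 0 := by
        rw [Finset.add_sum_erase Z u hz]; exact hsumZ
      rw [eq_neg_of_add_eq_zero_left h3]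
      apply Submodule.neg_mem
      apply Submodule.sum_mem
      intro z' hz'
      have hne : z' ≠ z := (Finset.mem_erase.mp hz').1
      exact Submodule.mem_iSup_of_mem z' (Submodule.mem_iSup_of_mem hne (humem z'))
    exact (Submodule.disjoint_def.mp (hindep z)) _ h1 h2
  -- now extract coefficients
  set z := t.1 with hzdef
  have hzZ : z ∈ Z := Finset.mem_image_of_mem Prod.fst ht
  have h0 := huz z hzZ
  set a : Fin 2 → ℂ := fun j => if (z, j) ∈ s then g (z, j) else 0 with ha
  have hfil : s.filter (fun x => x.1 = z)
      = ({(z, 0), (z, 1)} : Finset _).filter (fun x => x ∈ s) := by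
    ext ⟨x1, x2⟩
    simp only [Finset.mem_filter, Finset.mem_insert, Finset.mem_singleton]
    constructor
    · rintro ⟨hxs, rfl⟩
      rcases fin2 x2 with rfl | rfl
      · exact ⟨Or.inl rfl, hxs⟩
      · exact ⟨Or.inr rfl, hxs⟩
    · rintro ⟨h | h, hxs⟩ <;> (cases h; exact ⟨hxs, rfl⟩)
  have hrepr : u z = a 0 • w (z, 0) + a 1 • w (z, 1) := by
    rw [hu]
    simp only
    rw [hfil, Finset.sum_filter, Finset.sum_insert (by simp), Finset.sum_singleton]
    rw [ha]
    simp only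
    rw [ite_smul, ite_smul, zero_smul, zero_smul]
  rw [hrepr] at h0
  have h0' : ∀ n : ℕ, a 0 * (z : ℂ) ^ n + a 1 * (n * (z : ℂ) ^ n) = 0 := by
    intro n
    have := congrFun h0 n
    simpa [w, Pi.add_apply, Pi.smul_apply, smul_eq_mul, mul_assoc] using this
  have ha0 : a 0 = 0 := by
    have := h0' 0
    simpa using this
  have ha1 : a 1 = 0 := by
    have := h0' 1
    rw [ha0] at this
    simp only [zero_mul, zero_add, pow_one, Nat.cast_one, one_mul] at this
    rcases mul_eq_zero.mp this with h | h
    · exact h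
    · exact absurd h z.2
  have hteq : t = (z, t.2) := by rw [hzdef]
  rcases fin2 t.2 with h2 | h2
  · have : a 0 = g t := by rw [ha]; simp only; rw [← h2, ← hteq, if_pos ht]
    rw [← this, ha0]
  · have : a 1 = g t := by rw [ha]; simp only; rw [← h2, ← hteq, if_pos ht]
    rw [← this, ha1]


lemma fiber_sum {d : ℕ} (i : Fin d → ℕ) (g : (Σ k : Fin d, Fin (i k)) → Fin d) :
    ∑ c, (Finset.univ.filter fun t => g t = c).card = ∑ k, i k := by
  classical
  rw [← Finset.card_eq_sum_card_fiberwise (fun x _ => Finset.mem_univ (g x)),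
    Finset.card_univ, Fintype.card_sigma]
  simp

lemma expand {d : ℕ} (i : Fin d → ℕ) (G y : Fin d → ℕ → ℂ) (A : Fin d → Fin d → ℂ)
    (hG : ∀ k n, G k n = ∑ c, A k c * y c n) (n : ℕ) :
    ∏ k, G k n ^ i k =
      ∑ g : (Σ k : Fin d, Fin (i k)) → Fin d,
        (∏ t, A t.1 (g t)) * ∏ c, y c n ^ (Finset.univ.filter fun t => g t = c).card := by
  classical
  have h1 : ∏ t : Σ k : Fin d, Fin (i k), G t.1 n = ∏ k, G k n ^ i k := by
    rw [← Finset.univ_sigma_univ, Finset.prod_sigma]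
    exact Finset.prod_congr rfl fun k _ => by simp
  rw [← h1]
  calc ∏ t : Σ k : Fin d, Fin (i k), G t.1 n
      = ∏ t : Σ k : Fin d, Fin (i k), ∑ c, A t.1 c * y c n := by
        exact Finset.prod_congr rfl fun t _ => hG t.1 n
    _ = ∑ g : (Σ k : Fin d, Fin (i k)) → Fin d, ∏ t, A t.1 (g t) * y (g t) n :=
        Fintype.prod_sum _
    _ = ∑ g : (Σ k : Fin d, Fin (i k)) → Fin d,
          (∏ t, A t.1 (g t)) * ∏ t, y (g t) n := by
        exact Finset.sum_congr rfl fun g _ => Finset.prod_mul_distrib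
    _ = _ := by
        refine Finset.sum_congr rfl fun g _ => ?_
        congr 1
        rw [← Finset.prod_fiberwise Finset.univ g (fun t => y (g t) n)]
        refine Finset.prod_congr rfl fun c _ => ?_
        rw [Finset.prod_congr rfl (fun t htc => ?_), Finset.prod_const]
        rw [(Finset.mem_filter.mp htc).2]

lemma prod_pow_n {d : ℕ} (r : Fin d → ℂ) (j : Fin d → ℕ) (n : ℕ) :
    ∏ c, (r c ^ n) ^ j c = (∏ c, r c ^ j c) ^ n := by
  rw [← Finset.prod_pow]
  exact Finset.prod_congr rfl fun c _ => by rw [← pow_mul, mul_comm, pow_mul]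

lemma gen_mem (d : ℕ) (r lam : Fin d → ℂ) (F : ℕ → ℂ)
    (hF : ∀ n, F n = ∑ m, lam m * r m ^ n) (i : Fin d → ℕ) :
    (fun n : ℕ => ∏ m : Fin d, F (n + (m : ℕ)) ^ i m) ∈
      span ℂ (ef '' {z : ℂ | ∃ j : Fin d → ℕ, (∑ m, j m) = (∑ m, i m) ∧
        z = ∏ m, r m ^ j m}) := by
  classical
  have hG : ∀ (k : Fin d) (n : ℕ), F (n + (k : ℕ)) = ∑ c, (lam c * r c ^ (k : ℕ)) * (r c ^ n) := by
    intro k n; rw [hF]; exact Finset.sum_congr rfl fun c _ => by rw [pow_add]; ring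
  have key2 : (fun n : ℕ => ∏ m : Fin d, F (n + (m : ℕ)) ^ i m) =
      ∑ g : (Σ k : Fin d, Fin (i k)) → Fin d,
        (∏ t, (lam (g t) * r (g t) ^ ((t.1 : Fin d) : ℕ))) •
          ef (∏ c, r c ^ (Finset.univ.filter fun t => g t = c).card) := by
    funext n
    rw [expand i (fun k n => F (n + (k : ℕ))) (fun c n => r c ^ n)
      (fun k c => lam c * r c ^ (k : ℕ)) hG n, Finset.sum_apply]
    refine Finset.sum_congr rfl fun g _ => ?_
    simp only [Pi.smul_apply, smul_eq_mul, ef]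
    rw [prod_pow_n]
  rw [key2]
  refine Submodule.sum_mem _ fun g _ => Submodule.smul_mem _ _ (subset_span ?_)
  exact ⟨_, ⟨_, fiber_sum i g, rfl⟩, rfl⟩

lemma rev_expand (d : ℕ) (r lam : Fin d → ℂ) (hr_inj : Function.Injective r)
    (F : ℕ → ℂ) (hF : ∀ n, F n = ∑ m, lam m * r m ^ n) (i : Fin d → ℕ) :
    ∃ (coef : ((Σ k : Fin d, Fin (i k)) → Fin d) → ℂ)
      (jj : ((Σ k : Fin d, Fin (i k)) → Fin d) → (Fin d → ℕ)),
      (∀ g, (∑ m, jj g m) = ∑ m, i m) ∧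
      ∀ n : ℕ, (∏ m, lam m ^ i m) * (∏ m, r m ^ i m) ^ n =
        ∑ g, coef g * ∏ c : Fin d, F (n + (c : ℕ)) ^ jj g c := by
  classical
  set V : Matrix (Fin d) (Fin d) ℂ := (Matrix.vandermonde r).transpose with hV
  have hdet : IsUnit V.det := by
    rw [hV, Matrix.det_transpose]
    exact isUnit_iff_ne_zero.mpr (Matrix.det_vandermonde_ne_zero_iff.mpr hr_inj)
  set N : Matrix (Fin d) (Fin d) ℂ := V⁻¹ with hN
  have hNV : N * V = 1 := Matrix.nonsing_inv_mul V hdet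
  have hVapp : ∀ (c k : Fin d), V c k = r k ^ (c : ℕ) := fun c k => rfl
  have hG : ∀ (k : Fin d) (n : ℕ), lam k * r k ^ n = ∑ c, N k c * F (n + (c : ℕ)) := by
    intro k n
    have h1 : ∀ c : Fin d, F (n + (c : ℕ)) = ∑ j, V c j * (lam j * r j ^ n) := by
      intro c; rw [hF]
      exact Finset.sum_congr rfl fun j _ => by rw [hVapp, pow_add]; ring
    calc lam k * r k ^ n
        = ∑ j, (if k = j then (1:ℂ) else 0) * (lam j * r j ^ n) := by
          simp [ite_mul]
      _ = ∑ j, (N * V) k j * (lam j * r j ^ n) := by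
          rw [hNV]; exact Finset.sum_congr rfl fun j _ => by rw [Matrix.one_apply]
      _ = ∑ j, ∑ c, N k c * (V c j * (lam j * r j ^ n)) := by
          refine Finset.sum_congr rfl fun j _ => ?_
          rw [Matrix.mul_apply, Finset.sum_mul]
          exact Finset.sum_congr rfl fun c _ => by ring
      _ = ∑ c, N k c * F (n + (c : ℕ)) := by
          rw [Finset.sum_comm]
          refine Finset.sum_congr rfl fun c _ => ?_
          rw [h1 c, Finset.mul_sum]
  refine ⟨fun g => ∏ t, N t.1 (g t),
    fun g c => (Finset.univ.filter fun t => g t = c).card,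
    fun g => fiber_sum i g, fun n => ?_⟩
  have key := expand i (fun k n => lam k * r k ^ n) (fun c n => F (n + (c : ℕ))) N hG n
  calc (∏ m, lam m ^ i m) * (∏ m, r m ^ i m) ^ n
      = ∏ k, (lam k * r k ^ n) ^ i k := by
        rw [← prod_pow_n, ← Finset.prod_mul_distrib]
        exact (Finset.prod_congr rfl fun k _ => by rw [mul_pow]).symm
    _ = _ := key

lemma gen_mem_n (d : ℕ) (r lam : Fin d → ℂ) (F : ℕ → ℂ)
    (hF : ∀ n, F n = ∑ m, lam m * r m ^ n) (i : Fin d → ℕ) :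
    (fun n : ℕ => (n : ℂ) * ∏ m : Fin d, F (n + (m : ℕ)) ^ i m) ∈
      span ℂ (nef '' {z : ℂ | ∃ j : Fin d → ℕ, (∑ m, j m) = (∑ m, i m) ∧
        z = ∏ m, r m ^ j m}) := by
  classical
  have hG : ∀ (k : Fin d) (n : ℕ), F (n + (k : ℕ)) = ∑ c, (lam c * r c ^ (k : ℕ)) * (r c ^ n) := by
    intro k n; rw [hF]; exact Finset.sum_congr rfl fun c _ => by rw [pow_add]; ring
  have key2 : (fun n : ℕ => (n : ℂ) * ∏ m : Fin d, F (n + (m : ℕ)) ^ i m) =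
      ∑ g : (Σ k : Fin d, Fin (i k)) → Fin d,
        (∏ t, (lam (g t) * r (g t) ^ ((t.1 : Fin d) : ℕ))) •
          nef (∏ c, r c ^ (Finset.univ.filter fun t => g t = c).card) := by
    funext n
    rw [expand i (fun k n => F (n + (k : ℕ))) (fun c n => r c ^ n)
      (fun k c => lam c * r c ^ (k : ℕ)) hG n, Finset.sum_apply, Finset.mul_sum]
    refine Finset.sum_congr rfl fun g _ => ?_
    simp only [Pi.smul_apply, smul_eq_mul, nef]
    rw [prod_pow_n]
    ring
  rw [key2]
  refine Submodule.sum_mem _ fun g _ => Submodule.smul_mem _ _ (subset_span ?_)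
  exact ⟨_, ⟨_, fiber_sum i g, rfl⟩, rfl⟩

lemma finrank_span_ef (S : Set ℂ) (hS : S.Finite) (h0 : ∀ z ∈ S, z ≠ 0) :
    Module.finrank ℂ (span ℂ (ef '' S)) = S.ncard := by
  classical
  haveI := hS.fintype
  set b : S → (ℕ → ℂ) := fun z => w (⟨(z : ℂ), h0 z z.2⟩, 0) with hb
  have hrange : Set.range b = ef '' S := by
    ext f
    constructor
    · rintro ⟨z, rfl⟩
      rw [hb]; simp only; rw [w_zero]; exact ⟨z, z.2, rfl⟩
    · rintro ⟨z, hz, rfl⟩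
      exact ⟨⟨z, hz⟩, by rw [hb]; simp only; rw [w_zero]⟩
  have hinj : Function.Injective
      (fun z : S => ((⟨(z : ℂ), h0 z z.2⟩, 0) : {z : ℂ // z ≠ 0} × Fin 2)) := by
    intro a b h
    simp only [Prod.mk.injEq, Subtype.mk.injEq] at h
    exact Subtype.ext h.1
  have hli : LinearIndependent ℂ b := li_w.comp _ hinj
  rw [← hrange, finrank_span_eq_card hli, ← Nat.card_coe_set_eq, Nat.card_eq_fintype_card]

lemma finrank_span_ef_nef (S : Set ℂ) (hS : S.Finite) (h0 : ∀ z ∈ S, z ≠ 0) :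
    Module.finrank ℂ (span ℂ (ef '' S ∪ nef '' S)) = 2 * S.ncard := by
  classical
  haveI := hS.fintype
  set b : S × Fin 2 → (ℕ → ℂ) := fun x => w (⟨(x.1 : ℂ), h0 x.1 x.1.2⟩, x.2) with hb
  have hrange : Set.range b = ef '' S ∪ nef '' S := by
    ext f
    constructor
    · rintro ⟨⟨z, j⟩, rfl⟩
      rcases fin2 j with rfl | rfl
      · left; rw [hb]; simp only; rw [w_zero]; exact ⟨z, z.2, rfl⟩
      · right; rw [hb]; simp only; rw [w_one]; exact ⟨z, z.2, rfl⟩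
    · rintro (⟨z, hz, rfl⟩ | ⟨z, hz, rfl⟩)
      · exact ⟨(⟨z, hz⟩, 0), by rw [hb]; simp only; rw [w_zero]⟩
      · exact ⟨(⟨z, hz⟩, 1), by rw [hb]; simp only; rw [w_one]⟩
  have hinj : Function.Injective
      (fun x : S × Fin 2 =>
        ((⟨(x.1 : ℂ), h0 x.1 x.1.2⟩, x.2) : {z : ℂ // z ≠ 0} × Fin 2)) := by
    rintro ⟨a1, a2⟩ ⟨b1, b2⟩ h
    simp only [Prod.mk.injEq, Subtype.mk.injEq] at h
    exact Prod.ext (Subtype.ext h.1) h.2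
  have hli : LinearIndependent ℂ b := li_w.comp _ hinj
  rw [← hrange, finrank_span_eq_card hli, Fintype.card_prod, Fintype.card_fin, mul_comm,
    ← Nat.card_coe_set_eq, Nat.card_eq_fintype_card]

lemma span_inter {I : Type*} {v : I → (ℕ → ℂ)} (hv : LinearIndependent ℂ v) (P Q : Set I) :
    span ℂ (v '' P) ⊓ span ℂ (v '' Q) = span ℂ (v '' (P ∩ Q)) := by
  have hsplit : span ℂ (v '' P) = span ℂ (v '' (P ∩ Q)) ⊔ span ℂ (v '' (P \ Q)) := by
    rw [← Submodule.span_union, ← Set.image_union, Set.inter_union_diff]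
  have hdisj : Disjoint (span ℂ (v '' (P \ Q))) (span ℂ (v '' Q)) :=
    hv.disjoint_span_image (Set.disjoint_left.mpr fun a ha haQ => ha.2 haQ)
  calc span ℂ (v '' P) ⊓ span ℂ (v '' Q)
      = (span ℂ (v '' (P ∩ Q)) ⊔ span ℂ (v '' (P \ Q))) ⊓ span ℂ (v '' Q) := by rw [← hsplit]
    _ = span ℂ (v '' (P ∩ Q)) ⊔ (span ℂ (v '' (P \ Q)) ⊓ span ℂ (v '' Q)) :=
        sup_inf_assoc_of_le _ (Submodule.span_mono (Set.image_mono Set.inter_subset_right))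
    _ = _ := by rw [hdisj.eq_bot, sup_bot_eq]

end GWdim

open GWdim Submodule Set in
/-- **Theorem 5.1** (thm:dimw) of Greene–Wilf: dimensions of the spaces of
target monomials for a C-finite sequence with distinct roots, in terms of the
sets of values of the degree-`p` and degree-`q` monomials in the roots. -/
theorem dim_target_monomials
    (d : ℕ) (hd : 1 ≤ d)
    (r : Fin d → ℂ) (lam : Fin d → ℂ)
    (hr_inj : Function.Injective r) (hr0 : ∀ m, r m ≠ 0) (hlam : ∀ m, lam m ≠ 0)
    (F : ℕ → ℂ) (hF : ∀ n : ℕ, F n = ∑ m : Fin d, lam m * r m ^ n)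
    (p q : ℕ) (hp : 0 < p) (hq : 0 < q) (hpq : p ≠ q)
    (Wp Wq Wpq : Submodule ℂ (ℕ → ℂ))
    (hWp : Wp = Submodule.span ℂ {f : ℕ → ℂ | ∃ i : Fin d → ℕ,
      (∑ m, i m) = p ∧ f = fun n : ℕ => ∏ m : Fin d, F (n + (m : ℕ)) ^ i m})
    (hWq : Wq = Submodule.span ℂ {f : ℕ → ℂ | ∃ i : Fin d → ℕ,
      (∑ m, i m) = q ∧
      (f = (fun n : ℕ => ∏ m : Fin d, F (n + (m : ℕ)) ^ i m) ∨
       f = fun n : ℕ => (n : ℂ) * ∏ m : Fin d, F (n + (m : ℕ)) ^ i m)})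
    (hWpq : Wpq = Wp ⊔ Wq)
    (Sp Sq : Set ℂ)
    (hSp : Sp = {z : ℂ | ∃ i : Fin d → ℕ, (∑ m, i m) = p ∧ z = ∏ m, r m ^ i m})
    (hSq : Sq = {z : ℂ | ∃ i : Fin d → ℕ, (∑ m, i m) = q ∧ z = ∏ m, r m ^ i m}) :
    Module.finrank ℂ Wp = Sp.ncard ∧
    Module.finrank ℂ Wq = 2 * Sq.ncard ∧
    Module.finrank ℂ Wpq = Sp.ncard + 2 * Sq.ncard - (Sp ∩ Sq).ncard := by
  classical
  subst hWpq
  -- basic facts about Sp and Sq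
  have hSp0 : ∀ z ∈ Sp, z ≠ 0 := by
    rw [hSp]; rintro z ⟨i, -, rfl⟩
    exact Finset.prod_ne_zero_iff.mpr fun m _ => pow_ne_zero _ (hr0 m)
  have hSq0 : ∀ z ∈ Sq, z ≠ 0 := by
    rw [hSq]; rintro z ⟨i, -, rfl⟩
    exact Finset.prod_ne_zero_iff.mpr fun m _ => pow_ne_zero _ (hr0 m)
  have hSfin : ∀ u : ℕ,
      {z : ℂ | ∃ i : Fin d → ℕ, (∑ m, i m) = u ∧ z = ∏ m, r m ^ i m}.Finite := by
    intro u
    have h1 : {i : Fin d → ℕ | (∑ m, i m) = u}.Finite := by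
      refine Set.Finite.subset (Set.Finite.pi fun _ : Fin d => Set.finite_Iic u) ?_
      intro i hi
      rw [Set.mem_setOf_eq] at hi
      rw [Set.mem_pi]
      intro m _
      rw [Set.mem_Iic, ← hi]
      exact Finset.single_le_sum (fun _ _ => Nat.zero_le _) (Finset.mem_univ m)
    refine ((h1.image fun i => ∏ m, r m ^ i m)).subset ?_
    rintro z ⟨i, hi, rfl⟩
    exact ⟨i, hi, rfl⟩
  have hSpfin : Sp.Finite := by rw [hSp]; exact hSfin p
  have hSqfin : Sq.Finite := by rw [hSq]; exact hSfin q
  -- span characterizations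
  have EWp : Wp = span ℂ (ef '' Sp) := by
    apply le_antisymm
    · rw [hWp]
      refine span_le.mpr ?_
      rintro f ⟨i, hi, rfl⟩
      have h := gen_mem d r lam F hF i
      rw [hi] at h
      rw [hSp]
      exact h
    · refine span_le.mpr ?_
      rintro f ⟨z, hz, rfl⟩
      rw [hSp] at hz
      obtain ⟨i, hip, rfl⟩ := hz
      obtain ⟨coef, jj, hjj, hkey⟩ := rev_expand d r lam hr_inj F hF i
      have hlamne : (∏ m, lam m ^ i m) ≠ 0 :=
        Finset.prod_ne_zero_iff.mpr fun m _ => pow_ne_zero _ (hlam m)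
      have heq : ef (∏ m, r m ^ i m) = (∏ m, lam m ^ i m)⁻¹ •
          ∑ g, coef g • (fun n : ℕ => ∏ c : Fin d, F (n + (c : ℕ)) ^ jj g c) := by
        funext n
        simp only [Pi.smul_apply, Finset.sum_apply, smul_eq_mul, ef]
        rw [← hkey n, inv_mul_cancel_left₀ hlamne]
      rw [hWp, SetLike.mem_coe, heq]
      exact smul_mem _ _ (sum_mem fun g _ =>
        smul_mem _ _ (subset_span ⟨jj g, (hjj g).trans hip, rfl⟩))
  have EWq : Wq = span ℂ (ef '' Sq ∪ nef '' Sq) := by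
    apply le_antisymm
    · rw [hWq]
      refine span_le.mpr ?_
      rintro f ⟨i, hi, rfl | rfl⟩
      · have h := gen_mem d r lam F hF i
        rw [hi] at h
        rw [hSq]
        exact span_mono Set.subset_union_left h
      · have h := gen_mem_n d r lam F hF i
        rw [hi] at h
        rw [hSq]
        exact span_mono Set.subset_union_right h
    · refine span_le.mpr ?_
      rintro f (⟨z, hz, rfl⟩ | ⟨z, hz, rfl⟩) <;>
        [ (rw [hSq] at hz; obtain ⟨i, hiq, rfl⟩ := hz;
           obtain ⟨coef, jj, hjj, hkey⟩ := rev_expand d r lam hr_inj F hF i;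
           have hlamne : (∏ m, lam m ^ i m) ≠ 0 :=
             Finset.prod_ne_zero_iff.mpr fun m _ => pow_ne_zero _ (hlam m);
           have heq : ef (∏ m, r m ^ i m) = (∏ m, lam m ^ i m)⁻¹ •
               ∑ g, coef g • (fun n : ℕ => ∏ c : Fin d, F (n + (c : ℕ)) ^ jj g c) := by
             funext n
             simp only [Pi.smul_apply, Finset.sum_apply, smul_eq_mul, ef]
             rw [← hkey n, inv_mul_cancel_left₀ hlamne]
           rw [hWq, SetLike.mem_coe, heq];
           exact smul_mem _ _ (sum_mem fun g _ =>
             smul_mem _ _ (subset_span ⟨jj g, (hjj g).trans hiq, Or.inl rfl⟩)));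
          (rw [hSq] at hz; obtain ⟨i, hiq, rfl⟩ := hz;
           obtain ⟨coef, jj, hjj, hkey⟩ := rev_expand d r lam hr_inj F hF i;
           have hlamne : (∏ m, lam m ^ i m) ≠ 0 :=
             Finset.prod_ne_zero_iff.mpr fun m _ => pow_ne_zero _ (hlam m);
           have heq : nef (∏ m, r m ^ i m) = (∏ m, lam m ^ i m)⁻¹ •
               ∑ g, coef g •
                 (fun n : ℕ => (n : ℂ) * ∏ c : Fin d, F (n + (c : ℕ)) ^ jj g c) := by
             funext n
             simp only [Pi.smul_apply, Finset.sum_apply, smul_eq_mul, nef]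
             have hsum : ∑ g, coef g * ((n : ℂ) * ∏ c : Fin d, F (n + (c : ℕ)) ^ jj g c)
                 = (n : ℂ) * ∑ g, coef g * ∏ c : Fin d, F (n + (c : ℕ)) ^ jj g c := by
               rw [Finset.mul_sum]
               exact Finset.sum_congr rfl fun g _ => by ring
             rw [hsum, ← hkey n]
             field_simp
           rw [hWq, SetLike.mem_coe, heq];
           exact smul_mem _ _ (sum_mem fun g _ =>
             smul_mem _ _ (subset_span ⟨jj g, (hjj g).trans hiq, Or.inr rfl⟩)))]
  -- finite dimensionality
  haveI instWp : FiniteDimensional ℂ Wp := by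
    rw [EWp]; exact FiniteDimensional.span_of_finite ℂ (hSpfin.image ef)
  haveI instWq : FiniteDimensional ℂ Wq := by
    rw [EWq]
    exact FiniteDimensional.span_of_finite ℂ ((hSqfin.image ef).union (hSqfin.image nef))
  -- the three dimension computations
  have e1 : Module.finrank ℂ Wp = Sp.ncard := by
    rw [EWp]; exact finrank_span_ef Sp hSpfin hSp0
  have e2 : Module.finrank ℂ Wq = 2 * Sq.ncard := by
    rw [EWq]; exact finrank_span_ef_nef Sq hSqfin hSq0
  -- intersection
  set P : Set ({z : ℂ // z ≠ 0} × Fin 2) := {x | (x.1 : ℂ) ∈ Sp ∧ x.2 = 0} with hP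
  set Q : Set ({z : ℂ // z ≠ 0} × Fin 2) := {x | (x.1 : ℂ) ∈ Sq} with hQ
  have hwP : w '' P = ef '' Sp := by
    ext f
    constructor
    · rintro ⟨⟨z, j⟩, ⟨hz, hj⟩, rfl⟩
      obtain rfl : j = 0 := hj
      exact ⟨z, hz, (w_zero z).symm⟩
    · rintro ⟨z, hz, rfl⟩
      exact ⟨(⟨z, hSp0 z hz⟩, 0), ⟨hz, rfl⟩, w_zero _⟩
  have hwQ : w '' Q = ef '' Sq ∪ nef '' Sq := by
    ext f
    constructor
    · rintro ⟨⟨z, j⟩, hz, rfl⟩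
      rcases fin2 j with rfl | rfl
      · exact Or.inl ⟨z, hz, (w_zero z).symm⟩
      · exact Or.inr ⟨z, hz, (w_one z).symm⟩
    · rintro (⟨z, hz, rfl⟩ | ⟨z, hz, rfl⟩)
      · exact ⟨(⟨z, hSq0 z hz⟩, 0), hz, w_zero _⟩
      · exact ⟨(⟨z, hSq0 z hz⟩, 1), hz, w_one _⟩
  have hwPQ : w '' (P ∩ Q) = ef '' (Sp ∩ Sq) := by
    ext f
    constructor
    · rintro ⟨⟨z, j⟩, ⟨⟨hzp, hj⟩, hzq⟩, rfl⟩
      obtain rfl : j = 0 := hj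
      exact ⟨z, ⟨hzp, hzq⟩, (w_zero z).symm⟩
    · rintro ⟨z, ⟨hzp, hzq⟩, rfl⟩
      exact ⟨(⟨z, hSp0 z hzp⟩, 0), ⟨⟨hzp, rfl⟩, hzq⟩, w_zero _⟩
  have e3 : Module.finrank ℂ ↥(Wp ⊓ Wq) = (Sp ∩ Sq).ncard := by
    rw [EWp, EWq, ← hwP, ← hwQ, span_inter li_w P Q, hwPQ]
    exact finrank_span_ef _ (hSpfin.subset Set.inter_subset_left)
      (fun z hz => hSp0 z hz.1)
  have e4 := Submodule.finrank_sup_add_finrank_inf_eq Wp Wq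
  have hle : (Sp ∩ Sq).ncard ≤ Sp.ncard :=
    Set.ncard_le_ncard Set.inter_subset_left hSpfin
  refine ⟨e1, e2, ?_⟩
  rw [e1, e2, e3] at e4
  omega
end
end

section
/- Let x_1, …, x_n be complex numbers and a_1, …, a_n positive integers with N = a_1 + ⋯ + a_n. Let M be the N × N matrix whose rows are indexed by pairs (i,k) with 1 ≤ i ≤ n and 0 ≤ k ≤ a_i − 1 (ordered lexicographically: all rows for i=1 first, in increasing k, then i=2, etc.) and whose columns are indexed by c ∈ {0, 1, …, N−1}, with entry M_{(i,k),c} equal to the k-th derivative of t^c evaluated at x_i, i.e. c(c−1)⋯(c−k+1)·x_i^{c−k} for c ≥ k and 0 for c < k. Then det M = ( Π_{i=1}^{n} Π_{j=1}^{a_i−1} j! ) · Π_{1 ≤ i < j ≤ n} (x_j − x_i)^{a_i a_j}, where an empty product equals 1. -/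
open Polynomial Finset

namespace ConfluentVdmAux

variable {n : ℕ} (x : Fin n → ℂ) (a : Fin n → ℕ)

/-- prefix sums of the multiplicities -/
def s (a : Fin n → ℕ) (i : Fin n) : ℕ := ∑ j ∈ Finset.univ.filter (fun j => j < i), a j

lemma s_add_le (i : Fin n) : s a i + a i ≤ ∑ j, a j := by
  classical
  have hd : i ∉ Finset.univ.filter (fun j => j < i) := by simp
  calc s a i + a i = ∑ j ∈ insert i (Finset.univ.filter (fun j => j < i)), a j := by
        rw [Finset.sum_insert hd]; unfold s; ring
    _ ≤ ∑ j, a j := Finset.sum_le_sum_of_subset (Finset.subset_univ _)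

lemma s_mono {i i' : Fin n} (h : i < i') : s a i + a i ≤ s a i' := by
  classical
  have hd : i ∉ Finset.univ.filter (fun j => j < i) := by simp
  have hsub : insert i (Finset.univ.filter (fun j => j < i)) ⊆
      Finset.univ.filter (fun j => j < i') := by
    intro j hj
    rcases Finset.mem_insert.mp hj with rfl | hj
    · simp [h]
    · simp only [Finset.mem_filter, Finset.mem_univ, true_and] at hj ⊢
      exact lt_trans hj h
  calc s a i + a i = ∑ j ∈ insert i (Finset.univ.filter (fun j => j < i)), a j := by
        rw [Finset.sum_insert hd]; unfold s; ring
    _ ≤ s a i' := Finset.sum_le_sum_of_subset hsub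

lemma s_unique {i i' : Fin n} {k k' : ℕ} (hk : k < a i) (hk' : k' < a i')
    (h : s a i + k = s a i' + k') : i = i' ∧ k = k' := by
  rcases lt_trichotomy i i' with hlt | rfl | hlt
  · exfalso; have := s_mono a hlt; omega
  · exact ⟨rfl, by omega⟩
  · exfalso; have := s_mono a hlt; omega

lemma s_decomp {r : ℕ} (hr : r < ∑ j, a j) :
    ∃ i k, k < a i ∧ r = s a i + k := by
  classical
  have hn : 0 < n := by
    rcases Nat.eq_zero_or_pos n with rfl | h
    · simp at hr
    · exact h
  set T := Finset.univ.filter (fun i : Fin n => s a i ≤ r) with hT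
  have hs0 : s a ⟨0, hn⟩ = 0 := by
    unfold s
    apply Finset.sum_eq_zero
    intro j hj
    simp only [Finset.mem_filter, Finset.mem_univ, true_and, Fin.lt_def] at hj
    omega
  have hTne : T.Nonempty := ⟨⟨0, hn⟩, by simp [hT, hs0]⟩
  set i := T.max' hTne with hi_def
  have hi : s a i ≤ r := (Finset.mem_filter.mp (T.max'_mem hTne)).2
  refine ⟨i, r - s a i, ?_, by omega⟩
  by_contra hcon
  push_neg at hcon
  have h1 : s a i + a i ≤ r := by omega
  by_cases hlast : (i : ℕ) + 1 < n
  · set i' : Fin n := ⟨(i : ℕ) + 1, hlast⟩ with hi'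
    have hset : Finset.univ.filter (fun j => j < i') =
        insert i (Finset.univ.filter (fun j => j < i)) := by
      ext j
      simp only [Finset.mem_filter, Finset.mem_univ, true_and, Finset.mem_insert, Fin.lt_def,
        hi']
      constructor
      · intro hj
        rcases Nat.lt_succ_iff_lt_or_eq.mp hj with hj | hj
        · exact Or.inr hj
        · exact Or.inl (Fin.ext hj)
      · rintro (rfl | hj)
        · omega
        · omega
    have hs' : s a i' = s a i + a i := by
      unfold s
      rw [hset, Finset.sum_insert (by simp)]
      ring
    have hmem : i' ∈ T := by
      simp only [hT, Finset.mem_filter, Finset.mem_univ, true_and]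
      omega
    have hle := Finset.le_max' T i' hmem
    rw [← hi_def] at hle
    have : (i' : ℕ) ≤ (i : ℕ) := hle
    simp [hi'] at this
  · have hun : (Finset.univ : Finset (Fin n)) =
        insert i (Finset.univ.filter (fun j => j < i)) := by
      ext j
      simp only [Finset.mem_univ, true_iff, Finset.mem_insert, Finset.mem_filter, true_and,
        Fin.lt_def]
      have hj := j.2
      have : (j : ℕ) ≤ (i : ℕ) := by omega
      rcases Nat.lt_or_ge (j : ℕ) (i : ℕ) with h | h
      · exact Or.inr h
      · exact Or.inl (Fin.ext (by omega))
    have : (∑ j, a j) = a i + s a i := by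
      rw [hun, Finset.sum_insert (by simp)]
      rfl
    omega

/-- the product of the already-handled linear factors -/
noncomputable def g (x : Fin n → ℂ) (a : Fin n → ℕ) (i : Fin n) : ℂ[X] :=
  ∏ j ∈ Finset.univ.filter (fun j => j < i), (X - C (x j)) ^ (a j)

noncomputable def Q (i : Fin n) (k : ℕ) : ℂ[X] := g x a i * (X - C (x i)) ^ k

lemma monic_g (i : Fin n) : (g x a i).Monic :=
  monic_prod_of_monic _ _ fun j _ => (monic_X_sub_C _).pow _

lemma natDegree_g (i : Fin n) : (g x a i).natDegree = s a i := by
  rw [g, natDegree_prod_of_monic _ _ fun j _ => (monic_X_sub_C _).pow _]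
  unfold s
  refine Finset.sum_congr rfl fun j _ => ?_
  rw [natDegree_pow, natDegree_X_sub_C, mul_one]

lemma monic_Q (i : Fin n) (k : ℕ) : (Q x a i k).Monic :=
  (monic_g x a i).mul ((monic_X_sub_C _).pow _)

lemma natDegree_Q (i : Fin n) (k : ℕ) : (Q x a i k).natDegree = s a i + k := by
  rw [Q, (monic_g x a i).natDegree_mul ((monic_X_sub_C _).pow _), natDegree_g,
    natDegree_pow, natDegree_X_sub_C, mul_one]

lemma dvd_Q {i i' : Fin n} {k k' : ℕ} (hk : k < a i) (hk' : k' < a i')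
    (hlt : s a i + k < s a i' + k') : (X - C (x i)) ^ (k + 1) ∣ Q x a i' k' := by
  rcases lt_trichotomy i i' with h | rfl | h
  · have h1 : (X - C (x i)) ^ (a i) ∣ g x a i' :=
      Finset.dvd_prod_of_mem _ (by simp [h])
    exact dvd_mul_of_dvd_left ((pow_dvd_pow _ (by omega)).trans h1) _
  · exact (pow_dvd_pow (X - C (x i)) (by omega : k + 1 ≤ k')).mul_left _
  · exfalso; have := s_mono a h; omega

lemma eval_iterate_eq_zero {p : ℂ[X]} {t : ℂ} {k : ℕ} (h : (X - C t) ^ (k + 1) ∣ p) :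
    (derivative^[k] p).eval t = 0 := by
  have h2 := pow_sub_dvd_iterate_derivative_of_pow_dvd k h
  rw [show k + 1 - k = 1 by omega, pow_one] at h2
  exact dvd_iff_isRoot.mp h2

lemma eval_iterate_Q (i : Fin n) (k : ℕ) :
    (derivative^[k] (Q x a i k)).eval (x i) = (k.factorial : ℂ) * (g x a i).eval (x i) := by
  rw [Q, mul_comm, iterate_derivative_mul, eval_finset_sum,
    Finset.sum_eq_single_of_mem 0 (Finset.mem_range.mpr k.succ_pos)]
  · rw [Nat.choose_zero_right, one_smul, eval_mul, Nat.sub_zero,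
      iterate_derivative_X_sub_pow_self, eval_natCast, Function.iterate_zero_apply]
  · intro b hb hb0
    rw [iterate_derivative_X_sub_pow, eval_smul, eval_mul, eval_smul, eval_pow,
      Nat.sub_sub_self (Finset.mem_range_succ_iff.mp hb), eval_sub, eval_X, eval_C,
      sub_self, zero_pow hb0, smul_zero, zero_mul, smul_zero]

lemma iter_deriv_sum {ι : Type*} (t : Finset ι) (f : ι → ℂ[X]) (k : ℕ) :
    derivative^[k] (∑ i ∈ t, f i) = ∑ i ∈ t, derivative^[k] (f i) := by
  induction k with
  | zero => simp
  | succ k ih =>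
    rw [Function.iterate_succ_apply', ih, derivative_sum]
    exact Finset.sum_congr rfl fun i _ => (Function.iterate_succ_apply' _ _ _).symm

lemma eval_iterate_eq_sum {p : ℂ[X]} {N : ℕ} (h : p.natDegree < N) (k : ℕ) (t : ℂ) :
    (derivative^[k] p).eval t =
      ∑ b ∈ Finset.range N, p.coeff b * ((b.descFactorial k : ℂ) * t ^ (b - k)) := by
  conv_lhs => rw [p.as_sum_range' N h]
  rw [iter_deriv_sum, eval_finset_sum]
  refine Finset.sum_congr rfl fun b _ => ?_
  rw [← C_mul_X_pow_eq_monomial, iterate_derivative_C_mul,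
    iterate_derivative_X_pow_eq_natCast_mul, eval_mul, eval_C, eval_mul, eval_natCast,
    eval_pow, eval_X]

lemma fact_prod (m : ℕ) :
    (∏ k ∈ Finset.range m, (k.factorial : ℂ)) = ∏ j ∈ Finset.Icc 1 (m - 1), (j.factorial : ℂ) := by
  induction m with
  | zero => simp
  | succ m ih =>
    rw [Finset.prod_range_succ, ih]
    rcases Nat.eq_zero_or_pos m with rfl | hm
    · simp
    · rw [Nat.succ_sub_one, show m = (m - 1) + 1 by omega,
        Finset.prod_Icc_succ_top (by omega)]
      rw [show m - 1 + 1 = m by omega]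

end ConfluentVdmAux

open ConfluentVdmAux Polynomial Finset

/-- **Theorem 5.3** (nicematrix) of Greene–Wilf: the confluent (generalized)
Vandermonde determinant. The row of `M` in position `∑_{j<i} a_j + k`
(the lexicographic position of the pair `(i,k)`, `0 ≤ k < a_i`) has entries
`c ↦ (d/dt)^k t^c |_{t = x_i} = c(c-1)⋯(c-k+1) x_i^(c-k)` (zero for `c < k`),
and `det M = (∏_i ∏_{j=1}^{a_i-1} j!) ∏_{i<j} (x_j - x_i)^(a_i a_j)`. -/
theorem confluent_vandermonde_det
    (n : ℕ) (x : Fin n → ℂ) (a : Fin n → ℕ) (ha : ∀ i, 0 < a i)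
    (N : ℕ) (hN : N = ∑ i, a i)
    (M : Matrix (Fin N) (Fin N) ℂ)
    (hM : ∀ (i : Fin n) (k : ℕ), k < a i → ∀ ρ : Fin N,
      (ρ : ℕ) = (∑ j ∈ Finset.univ.filter (fun j => j < i), a j) + k →
      ∀ c : Fin N, M ρ c = ((c : ℕ).descFactorial k : ℂ) * x i ^ ((c : ℕ) - k)) :
    M.det = (∏ i, ∏ j ∈ Finset.Icc 1 (a i - 1), (Nat.factorial j : ℂ)) *
      ∏ pr ∈ (Finset.univ : Finset (Fin n × Fin n)).filter (fun pr => pr.1 < pr.2),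
        (x pr.2 - x pr.1) ^ (a pr.1 * a pr.2) := by
  classical
  subst hN
  have hdec : ∀ c : Fin (∑ i, a i), ∃ i k, k < a i ∧ (c : ℕ) = s a i + k :=
    fun c => s_decomp a c.2
  choose I K hK hIK using hdec
  set U : Matrix (Fin (∑ i, a i)) (Fin (∑ i, a i)) ℂ :=
    Matrix.of fun b c => (Q x a (I c) (K c)).coeff b with hU
  have hQdeg : ∀ c : Fin (∑ i, a i), (Q x a (I c) (K c)).natDegree = (c : ℕ) := by
    intro c; rw [natDegree_Q, ← hIK]
  have hUtri : U.BlockTriangular id := by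
    intro b c h
    show (Q x a (I c) (K c)).coeff (b : ℕ) = 0
    exact coeff_eq_zero_of_natDegree_lt (lt_of_eq_of_lt (hQdeg c) h)
  have hUdiag : ∀ c, U c c = 1 := by
    intro c
    show (Q x a (I c) (K c)).coeff c = 1
    rw [show ((c : Fin (∑ i, a i)) : ℕ) = (Q x a (I c) (K c)).natDegree from (hQdeg c).symm]
    exact (monic_Q x a (I c) (K c)).coeff_natDegree
  have hUdet : U.det = 1 := by
    rw [Matrix.det_of_upperTriangular hUtri]
    exact Finset.prod_eq_one fun c _ => hUdiag c
  have hM' : ∀ ρ c, (M * U) ρ c = (derivative^[K ρ] (Q x a (I c) (K c))).eval (x (I ρ)) := by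
    intro ρ c
    rw [Matrix.mul_apply, eval_iterate_eq_sum (N := ∑ i, a i) (by rw [hQdeg]; exact c.2),
      ← Fin.sum_univ_eq_sum_range
        (fun b => (Q x a (I c) (K c)).coeff b * (((b).descFactorial (K ρ) : ℂ) * x (I ρ) ^ (b - K ρ)))]
    refine Finset.sum_congr rfl fun b _ => ?_
    rw [hM (I ρ) (K ρ) (hK ρ) ρ (hIK ρ) b]
    show ((b : ℕ).descFactorial (K ρ) : ℂ) * x (I ρ) ^ ((b : ℕ) - K ρ) *
        (Q x a (I c) (K c)).coeff b = _
    ring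
  have htri : (M * U).BlockTriangular OrderDual.toDual := by
    intro ρ c h
    have hlt : (ρ : ℕ) < (c : ℕ) := h
    rw [hM']
    refine eval_iterate_eq_zero (dvd_Q x a (hK ρ) (hK c) ?_)
    rw [← hIK, ← hIK]
    exact hlt
  have hdet : M.det = ∏ ρ, ((K ρ).factorial : ℂ) * (g x a (I ρ)).eval (x (I ρ)) := by
    have h1 : M.det = (M * U).det := by rw [Matrix.det_mul, hUdet, mul_one]
    rw [h1, Matrix.det_of_lowerTriangular _ htri]
    refine Finset.prod_congr rfl fun ρ _ => ?_
    rw [hM', eval_iterate_Q]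
  rw [hdet]
  have hprod : (∏ ρ : Fin (∑ i, a i), ((K ρ).factorial : ℂ) * (g x a (I ρ)).eval (x (I ρ)))
      = ∏ i, ∏ k ∈ Finset.range (a i), ((k.factorial : ℂ) * (g x a i).eval (x i)) := by
    rw [← Finset.prod_sigma (Finset.univ : Finset (Fin n)) (fun i => Finset.range (a i))
      (fun p => ((p.2.factorial : ℂ) * (g x a p.1).eval (x p.1)))]
    refine Finset.prod_bij' (fun ρ _ => (⟨I ρ, K ρ⟩ : Σ _ : Fin n, ℕ))
      (fun p hp => (⟨s a p.1 + p.2, ?_⟩ : Fin (∑ i, a i))) ?_ ?_ ?_ ?_ ?_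
    · have hp2 : p.2 < a p.1 := by
        have := (Finset.mem_sigma.mp hp).2
        simpa using this
      have := s_add_le a p.1
      omega
    · intro ρ _
      simp only [Finset.mem_sigma, Finset.mem_univ, Finset.mem_range, true_and]
      exact hK ρ
    · intro p hp
      exact Finset.mem_univ _
    · intro ρ _
      exact Fin.ext (hIK ρ).symm
    · intro p hp
      have hp2 : p.2 < a p.1 := by
        have := (Finset.mem_sigma.mp hp).2
        simpa using this
      set c : Fin (∑ i, a i) := ⟨s a p.1 + p.2, by have := s_add_le a p.1; omega⟩ with hc
      have hcv : s a (I c) + K c = s a p.1 + p.2 := (hIK c).symm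
      obtain ⟨h1, h2⟩ := s_unique a (hK c) hp2 hcv
      exact Sigma.ext h1 (by simp [h2])
    · intro ρ _
      rfl
  rw [hprod]
  have hgev : ∀ i, (g x a i).eval (x i) =
      ∏ j ∈ Finset.univ.filter (fun j => j < i), (x i - x j) ^ (a j) := by
    intro i
    simp [g, eval_prod]
  have hsplit : ∀ i : Fin n, (∏ k ∈ Finset.range (a i), ((k.factorial : ℂ) * (g x a i).eval (x i)))
      = (∏ j ∈ Finset.Icc 1 (a i - 1), (Nat.factorial j : ℂ)) *
        ∏ j ∈ Finset.univ.filter (fun j => j < i), (x i - x j) ^ (a j * a i) := by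
    intro i
    rw [Finset.prod_mul_distrib, Finset.prod_const, Finset.card_range, fact_prod, hgev,
      ← Finset.prod_pow]
    congr 1
    exact Finset.prod_congr rfl fun j _ => by rw [← pow_mul]
  rw [Finset.prod_congr rfl fun i _ => hsplit i, Finset.prod_mul_distrib]
  congr 1
  rw [Finset.prod_filter]
  rw [show (∏ pr : Fin n × Fin n, if pr.1 < pr.2 then (x pr.2 - x pr.1) ^ (a pr.1 * a pr.2) else 1)
      = ∏ p1 : Fin n, ∏ p2 : Fin n,
        (if p1 < p2 then (x p2 - x p1) ^ (a p1 * a p2) else 1) from Fintype.prod_prod_type _]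
  rw [Finset.prod_comm]
  refine Finset.prod_congr rfl fun i _ => ?_
  rw [Finset.prod_filter]
end

section
/- Let A > 2 be an integer and define G : ℕ → ℂ by G(0) = 1, G(1) = A, G(2) = A^2, and G(n+3) = A·G(n+2) − G(n) for n ≥ 0. Let p ≥ 1. The family of functions ℕ → ℂ consisting of n ↦ G(n)^{i_1} G(n+1)^{i_2} G(n+2)^{i_3} over all nonnegative integer triples with i_1 + i_2 + i_3 = p, together with the functions n ↦ 1 and n ↦ n, is linearly independent over ℂ if and only if p is not divisible by 6. -/
instance gwFintype (p : ℕ) : Fintype {v : Fin 3 → ℕ // ∑ t, v t = p} :=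
  Fintype.subtype (Finset.Nat.antidiagonalTuple 3 p) (fun _ => Finset.Nat.mem_antidiagonalTuple)

noncomputable def gwFv (p : ℕ) (v : {v : Fin 3 → ℕ // ∑ t, v t = p}) : Fin 3 →₀ ℕ :=
  Finsupp.equivFunOnFinite.symm v.1


open Polynomial in
lemma gw_exists_roots (A : ℝ) (hA : 3 ≤ A) :
    ∃ r : Fin 3 → ℝ, (∀ i, (r i)^3 - A * (r i)^2 + 1 = 0) ∧
      r 0 ∈ Set.Ioo (-1 : ℝ) 0 ∧ r 1 ∈ Set.Ioo (0:ℝ) 1 ∧ r 2 ∈ Set.Ioo (A-1) A := by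
  set f : ℝ → ℝ := fun t => t^3 - A*t^2 + 1 with hf
  have hc : Continuous f := by fun_prop
  have key : ∀ a b : ℝ, a ≤ b → f a < 0 → 0 < f b → ∃ x ∈ Set.Ioo a b, f x = 0 := by
    intro a b hab ha hb
    have := intermediate_value_Ioo hab (hc.continuousOn (s := Set.Icc a b))
    have h0 : (0:ℝ) ∈ Set.Ioo (f a) (f b) := ⟨ha, hb⟩
    obtain ⟨x, hx, hfx⟩ := this h0
    exact ⟨x, hx, hfx⟩
  have key' : ∀ a b : ℝ, a ≤ b → 0 < f a → f b < 0 → ∃ x ∈ Set.Ioo a b, f x = 0 := by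
    intro a b hab ha hb
    have := intermediate_value_Ioo' hab (hc.continuousOn (s := Set.Icc a b))
    have h0 : (0:ℝ) ∈ Set.Ioo (f b) (f a) := ⟨hb, ha⟩
    obtain ⟨x, hx, hfx⟩ := this h0
    exact ⟨x, hx, hfx⟩
  obtain ⟨x0, hx0, hfx0⟩ := key (-1) 0 (by norm_num) (by simp only [hf]; nlinarith) (by simp only [hf]; norm_num)
  obtain ⟨x1, hx1, hfx1⟩ := key' 0 1 (by norm_num) (by simp only [hf]; norm_num) (by simp only [hf]; nlinarith)
  obtain ⟨x2, hx2, hfx2⟩ := key (A-1) A (by linarith) (by simp only [hf]; nlinarith) (by simp only [hf]; nlinarith)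
  exact ⟨![x0, x1, x2], by intro i; fin_cases i <;> simpa [hf] using ‹_›, by simpa using hx0,
    by simpa using hx1, by simpa using hx2⟩

lemma gw_vieta (a : ℝ) (r : Fin 3 → ℝ) (hr : ∀ i, (r i)^3 - a * (r i)^2 + 1 = 0)
    (h01 : r 0 ≠ r 1) (h02 : r 0 ≠ r 2) (h12 : r 1 ≠ r 2) :
    r 0 + r 1 + r 2 = a ∧ r 0 * r 1 + r 0 * r 2 + r 1 * r 2 = 0 ∧ r 0 * r 1 * r 2 = -1 := by
  have e : ∀ i j, r i ≠ r j → (r i)^2 + r i * r j + (r j)^2 - a * (r i + r j) = 0 := by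
    intro i j hij
    have h : (r i - r j) * ((r i)^2 + r i * r j + (r j)^2 - a * (r i + r j)) = 0 := by
      linear_combination (hr i) - (hr j)
    rcases mul_eq_zero.mp h with h' | h'
    · exact absurd (sub_eq_zero.mp h') hij
    · exact h'
  have e02 := e 0 2 h02
  have e12 := e 1 2 h12
  have hs1 : r 0 + r 1 + r 2 = a := by
    have h : (r 0 - r 1) * (r 0 + r 1 + r 2 - a) = 0 := by linear_combination e02 - e12
    rcases mul_eq_zero.mp h with h' | h'
    · exact absurd (sub_eq_zero.mp h') h01
    · linarith [h']
  refine ⟨hs1, ?_, ?_⟩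
  · have e01 := e 0 1 h01
    linear_combination (r 0 + r 1) * hs1 - e01
  · have e01 := e 0 1 h01
    have hs2 : r 0 * r 1 + r 0 * r 2 + r 1 * r 2 = 0 := by
      linear_combination (r 0 + r 1) * hs1 - e01
    linear_combination r 0 * hs2 - (r 0)^2 * hs1 + hr 0


lemma gw_G_formula (a : ℂ) (R : Fin 3 → ℂ)
    (hr : ∀ i, (R i)^3 - a * (R i)^2 + 1 = 0)
    (h01 : R 0 ≠ R 1) (h02 : R 0 ≠ R 2) (h12 : R 1 ≠ R 2)
    (hs1 : R 0 + R 1 + R 2 = a) (hs2 : R 0 * R 1 + R 0 * R 2 + R 1 * R 2 = 0)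
    (G : ℕ → ℂ) (h0 : G 0 = 1) (h1 : G 1 = a) (h2 : G 2 = a^2)
    (hrec : ∀ n, G (n+3) = a * G (n+2) - G n) :
    ∃ cc : Fin 3 → ℂ, (∀ i, cc i ≠ 0) ∧ ∀ n, G n = ∑ i, cc i * R i ^ n := by
  have hR0 : ∀ i, R i ≠ 0 := by
    intro i hi
    have := hr i
    rw [hi] at this
    norm_num at this
  have d01 : R 0 - R 1 ≠ 0 := sub_ne_zero.mpr h01
  have d02 : R 0 - R 2 ≠ 0 := sub_ne_zero.mpr h02
  have d12 : R 1 - R 2 ≠ 0 := sub_ne_zero.mpr h12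
  have d10 : R 1 - R 0 ≠ 0 := sub_ne_zero.mpr h01.symm
  have d20 : R 2 - R 0 ≠ 0 := sub_ne_zero.mpr h02.symm
  have d21 : R 2 - R 1 ≠ 0 := sub_ne_zero.mpr h12.symm
  refine ⟨![(R 0)^2/((R 0 - R 1)*(R 0 - R 2)), (R 1)^2/((R 1 - R 0)*(R 1 - R 2)),
      (R 2)^2/((R 2 - R 0)*(R 2 - R 1))], ?_, ?_⟩
  · intro i
    fin_cases i <;>
      · simp only [Matrix.cons_val_zero, Matrix.cons_val_one, Matrix.head_cons, Matrix.cons_val_two, Matrix.tail_cons]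
        exact div_ne_zero (pow_ne_zero _ (hR0 _)) (mul_ne_zero ‹_› ‹_›)
  · set cc : Fin 3 → ℂ := ![(R 0)^2/((R 0 - R 1)*(R 0 - R 2)), (R 1)^2/((R 1 - R 0)*(R 1 - R 2)),
      (R 2)^2/((R 2 - R 0)*(R 2 - R 1))] with hcc
    have key0 : ∑ i, cc i * R i ^ 0 = 1 := by
      simp only [Fin.sum_univ_three, hcc, pow_zero, mul_one]
      simp only [Matrix.cons_val_zero, Matrix.cons_val_one, Matrix.head_cons, Matrix.cons_val_two, Matrix.tail_cons]
      field_simp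
      ring
    have key1 : ∑ i, cc i * R i ^ 1 = a := by
      simp only [Fin.sum_univ_three, hcc, pow_one]
      simp only [Matrix.cons_val_zero, Matrix.cons_val_one, Matrix.head_cons, Matrix.cons_val_two, Matrix.tail_cons]
      rw [← hs1]
      field_simp
      ring
    have key2 : ∑ i, cc i * R i ^ 2 = a^2 := by
      simp only [Fin.sum_univ_three, hcc]
      simp only [Matrix.cons_val_zero, Matrix.cons_val_one, Matrix.head_cons, Matrix.cons_val_two, Matrix.tail_cons]
      have : a^2 = (R 0 + R 1 + R 2)^2 - (R 0 * R 1 + R 0 * R 2 + R 1 * R 2) := by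
        rw [hs1, hs2]; ring
      rw [this]
      field_simp
      ring
    have Srec : ∀ n, ∑ i, cc i * R i ^ (n+3) =
        a * (∑ i, cc i * R i ^ (n+2)) - ∑ i, cc i * R i ^ n := by
      intro n
      rw [Finset.mul_sum, ← Finset.sum_sub_distrib]
      refine Finset.sum_congr rfl fun i _ => ?_
      have : R i ^ (n+3) = a * R i ^ (n+2) - R i ^ n := by
        linear_combination (R i)^n * (hr i)
      rw [this]; ring
    have main : ∀ n, G n = ∑ i, cc i * R i ^ n ∧ G (n+1) = ∑ i, cc i * R i ^ (n+1) ∧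
        G (n+2) = ∑ i, cc i * R i ^ (n+2) := by
      intro n
      induction n with
      | zero => exact ⟨by rw [h0, key0], by rw [h1, key1], by rw [h2, key2]⟩
      | succ k ih => exact ⟨ih.2.1, ih.2.2, by rw [hrec k, Srec k, ih.2.2, ih.1]⟩
    exact fun n => (main n).1


open Polynomial in
lemma gw_irreducible (A : ℤ) (hA : 2 < A) :
    Irreducible (X^3 - C (A:ℚ) * X^2 + 1 : ℚ[X]) := by
  set F : ℚ[X] := X^3 - C (A:ℚ) * X^2 + 1 with hF
  have hdeg : F.natDegree = 3 := by
    rw [hF]; compute_degree!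
  refine (irreducible_iff_roots_eq_zero_of_degree_le_three (by omega) (by omega)).mpr ?_
  rw [Multiset.eq_zero_iff_forall_notMem]
  intro x hx
  have hF0 : F ≠ 0 := fun h => by simp [h] at hdeg
  have hroot : x^3 - (A:ℚ) * x^2 + 1 = 0 := by
    have h' := (mem_roots hF0).mp hx
    rw [IsRoot.def, hF] at h'
    simpa using h'
  have hmonic : (X^3 - C A * X^2 + 1 : ℤ[X]).Monic := by
    apply monic_of_natDegree_le_of_coeff_eq_one 3
    · compute_degree
    · compute_degree!
  have haev : Polynomial.aeval x (X^3 - C A * X^2 + 1 : ℤ[X]) = 0 := by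
    simp only [map_add, map_sub, map_pow, map_mul, map_one, aeval_X, aeval_C]
    rw [show (algebraMap ℤ ℚ) A = (A:ℚ) by simp]
    linear_combination hroot
  obtain ⟨m, hm⟩ := isInteger_of_is_root_of_monic hmonic haev
  have hmQ : (m:ℚ) = x := by exact_mod_cast hm
  have hZ2 : m^3 - A * m^2 + 1 = 0 := by
    have : (m:ℚ)^3 - (A:ℚ)*(m:ℚ)^2 + 1 = 0 := by rw [hmQ]; exact hroot
    exact_mod_cast this
  have hunit : m * (m * (A - m)) = 1 := by ring_nf; linear_combination -hZ2
  have h1 : m = 1 ∨ m = -1 := Int.isUnit_iff.mp (IsUnit.of_mul_eq_one _ hunit)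
  rcases h1 with h | h <;> rw [h] at hZ2 <;> omega


open Polynomial in
lemma gw_conj_rel (F : ℚ[X]) [Fact ((F.map (algebraMap ℚ ℂ)).Splits)] (σ : F.Gal)
    (x y z : F.rootSet ℂ) (a b c : ℤ)
    (h : (x:ℂ)^a * (y:ℂ)^b * (z:ℂ)^c = 1) :
    ((σ • x : F.rootSet ℂ) : ℂ)^a * ((σ • y : F.rootSet ℂ) : ℂ)^b *
      ((σ • z : F.rootSet ℂ) : ℂ)^c = 1 := by
  classical
  set ι := IsScalarTower.toAlgHom ℚ F.SplittingField ℂ with hι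
  have hinj : Function.Injective ι := RingHom.injective ι.toRingHom
  set e := Polynomial.Gal.rootsEquivRoots F ℂ with he
  have key : ∀ w : F.rootSet ℂ, ((σ • w : F.rootSet ℂ) : ℂ) = ι (σ ((e.symm w : F.SplittingField))) := by
    intro w
    rw [Polynomial.Gal.smul_def]
    rfl
  have keo : ∀ w : F.rootSet ℂ, (w : ℂ) = ι ((e.symm w : F.SplittingField)) := by
    intro w
    conv_lhs => rw [← e.apply_symm_apply w]
    rfl
  rw [keo x, keo y, keo z] at h
  rw [← map_zpow₀ ι, ← map_zpow₀ ι, ← map_zpow₀ ι, ← map_mul, ← map_mul] at h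
  have hK : ((e.symm x : F.SplittingField))^a * ((e.symm y : F.SplittingField))^b *
      ((e.symm z : F.SplittingField))^c = 1 := by
    apply hinj
    rw [h, map_one]
  have hK2 := congrArg σ hK
  rw [map_mul, map_mul, map_zpow₀, map_zpow₀, map_zpow₀, map_one] at hK2
  rw [key x, key y, key z, ← map_zpow₀ ι, ← map_zpow₀ ι, ← map_zpow₀ ι, ← map_mul, ← map_mul,
    hK2, map_one]

open Polynomial in
set_option maxHeartbeats 1000000 in
lemma gw_mult_indep (A : ℤ) (hA : 2 < A) (r : Fin 3 → ℝ)
    (hr : ∀ i, (r i)^3 - (A:ℝ) * (r i)^2 + 1 = 0)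
    (hI0 : r 0 ∈ Set.Ioo (-1:ℝ) 0) (hI1 : r 1 ∈ Set.Ioo (0:ℝ) 1)
    (hI2 : r 2 ∈ Set.Ioo ((A:ℝ)-1) (A:ℝ))
    (a b c : ℤ) (hrel : ((r 0 : ℂ))^a * ((r 1 : ℂ))^b * ((r 2 : ℂ))^c = 1) :
    a = b ∧ b = c ∧ Even a := by
  classical
  have hA3 : (3:ℝ) ≤ (A:ℝ) := by exact_mod_cast hA
  obtain ⟨hI0l, hI0r⟩ := hI0
  obtain ⟨hI1l, hI1r⟩ := hI1
  obtain ⟨hI2l, hI2r⟩ := hI2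
  have h01 : r 0 ≠ r 1 := by intro h; rw [h] at hI0r; linarith
  have h02 : r 0 ≠ r 2 := by intro h; rw [h] at hI0r; linarith
  have h12 : r 1 ≠ r 2 := by intro h; rw [h] at hI1r; linarith
  obtain ⟨hs1, hs2, hs3⟩ := gw_vieta (A:ℝ) r hr h01 h02 h12
  have hne : ∀ i, r i ≠ 0 := by
    intro i hi; have := hr i; rw [hi] at this; norm_num at this
  set u := Real.log |r 0| with hu
  set v := Real.log |r 1| with hv
  set w := Real.log |r 2| with hw
  have hulb : u < 0 := Real.log_neg (abs_pos.mpr (hne 0)) (by rw [abs_of_neg hI0r]; linarith)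
  have hvlb : v < 0 := Real.log_neg (abs_pos.mpr (hne 1)) (by rw [abs_of_pos hI1l]; linarith)
  have hwpos : 0 < w := Real.log_pos (by rw [abs_of_pos (by linarith : (0:ℝ) < r 2)]; linarith)
  have huv : u ≠ v := by
    intro h
    have habs : |r 0| = |r 1| := Real.log_injOn_pos
      (Set.mem_Ioi.mpr (abs_pos.mpr (hne 0))) (Set.mem_Ioi.mpr (abs_pos.mpr (hne 1))) h
    rw [abs_of_neg hI0r, abs_of_pos hI1l] at habs
    have h0 : r 0 = - r 1 := by linarith
    have e0 := hr 0
    rw [h0] at e0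
    nlinarith [hr 1, e0]
  have hsum : u + v + w = 0 := by
    have habs : |r 0| * |r 1| * |r 2| = 1 := by
      rw [← abs_mul, ← abs_mul, hs3]; norm_num
    have l1 := congrArg Real.log habs
    rw [Real.log_mul (mul_ne_zero (abs_ne_zero.mpr (hne 0)) (abs_ne_zero.mpr (hne 1)))
        (abs_ne_zero.mpr (hne 2)),
      Real.log_mul (abs_ne_zero.mpr (hne 0)) (abs_ne_zero.mpr (hne 1)), Real.log_one] at l1
    linarith
  have toLog : ∀ x y z : ℝ, x ≠ 0 → y ≠ 0 → z ≠ 0 →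
      ((x:ℂ))^a * ((y:ℂ))^b * ((z:ℂ))^c = 1 →
      (a:ℝ) * Real.log |x| + (b:ℝ) * Real.log |y| + (c:ℝ) * Real.log |z| = 0 := by
    intro x y z hx hy hz hxyz
    have habs : |x|^a * |y|^b * |z|^c = 1 := by
      have h2 := congrArg (‖·‖) hxyz
      rw [norm_mul, norm_mul, norm_zpow, norm_zpow, norm_zpow,
        Complex.norm_real, Complex.norm_real, Complex.norm_real, Real.norm_eq_abs, Real.norm_eq_abs,
        Real.norm_eq_abs, norm_one] at h2
      exact h2
    have l1 := congrArg Real.log habs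
    rw [Real.log_mul (mul_ne_zero (zpow_ne_zero _ (abs_ne_zero.mpr hx))
        (zpow_ne_zero _ (abs_ne_zero.mpr hy))) (zpow_ne_zero _ (abs_ne_zero.mpr hz)),
      Real.log_mul (zpow_ne_zero _ (abs_ne_zero.mpr hx)) (zpow_ne_zero _ (abs_ne_zero.mpr hy)),
      Real.log_zpow, Real.log_zpow, Real.log_zpow, Real.log_one] at l1
    linarith
  have Lmain : (a:ℝ) * u + (b:ℝ) * v + (c:ℝ) * w = 0 :=
    toLog _ _ _ (hne 0) (hne 1) (hne 2) hrel
  -- Galois setup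
  set F : ℚ[X] := X^3 - C (A:ℚ) * X^2 + 1 with hF
  have hirr := gw_irreducible A hA
  haveI : Fact ((F.map (algebraMap ℚ ℂ)).Splits) := ⟨IsAlgClosed.splits _⟩
  have hdeg : F.natDegree = 3 := by rw [hF]; compute_degree!
  have hF0 : F ≠ 0 := fun h => by simp [h] at hdeg
  have haev : ∀ x : ℂ, (aeval x) F = x^3 - (A:ℂ)*x^2 + 1 := by
    intro x
    rw [hF]
    simp only [map_add, map_sub, map_mul, map_pow, map_one, aeval_X, aeval_C]
    norm_num
  have hmem : ∀ i, ((r i : ℂ)) ∈ F.rootSet ℂ := by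
    intro i
    rw [Polynomial.mem_rootSet]
    refine ⟨hF0, ?_⟩
    rw [haev]
    have h2 : ((r i : ℂ))^3 - ((A:ℝ):ℂ)*((r i:ℂ))^2 + 1 = 0 := by
      exact_mod_cast congrArg (fun t : ℝ => (t:ℂ)) (hr i)
    push_cast at h2 ⊢
    exact h2
  set x0 : F.rootSet ℂ := ⟨_, hmem 0⟩ with hx0def
  set x1 : F.rootSet ℂ := ⟨_, hmem 1⟩ with hx1def
  set x2 : F.rootSet ℂ := ⟨_, hmem 2⟩ with hx2def
  have c1 : ((r 0:ℂ)) + (r 1:ℂ) + (r 2:ℂ) = (A:ℂ) := by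
    have := congrArg (fun t : ℝ => (t:ℂ)) hs1; push_cast at this; exact_mod_cast this
  have c2 : ((r 0:ℂ)) * (r 1:ℂ) + (r 0:ℂ) * (r 2:ℂ) + (r 1:ℂ) * (r 2:ℂ) = 0 := by
    have := congrArg (fun t : ℝ => (t:ℂ)) hs2; push_cast at this; exact_mod_cast this
  have c3 : ((r 0:ℂ)) * (r 1:ℂ) * (r 2:ℂ) = -1 := by
    have := congrArg (fun t : ℝ => (t:ℂ)) hs3; push_cast at this; exact_mod_cast this
  have hcov : ∀ ww : F.rootSet ℂ, (ww:ℂ) = (r 0:ℂ) ∨ (ww:ℂ) = (r 1:ℂ) ∨ (ww:ℂ) = (r 2:ℂ) := by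
    intro ww
    have hw := (Polynomial.mem_rootSet.mp ww.2).2
    rw [haev] at hw
    have hfac : ((ww:ℂ) - (r 0:ℂ)) * ((ww:ℂ) - (r 1:ℂ)) * ((ww:ℂ) - (r 2:ℂ)) = 0 := by
      linear_combination hw - ((ww:ℂ))^2 * c1 + ((ww:ℂ)) * c2 - c3
    rcases mul_eq_zero.mp hfac with h' | h'
    · rcases mul_eq_zero.mp h' with h'' | h''
      · exact Or.inl (sub_eq_zero.mp h'')
      · exact Or.inr (Or.inl (sub_eq_zero.mp h''))
    · exact Or.inr (Or.inr (sub_eq_zero.mp h'))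
  haveI := Polynomial.Gal.galAction_isPretransitive F ℂ hirr
  obtain ⟨σ, hσ⟩ := MulAction.exists_smul_eq F.Gal x0 x1
  have hrel2 := gw_conj_rel F σ x0 x1 x2 a b c hrel
  have hval0 : ((σ • x0 : F.rootSet ℂ):ℂ) = (r 1:ℂ) := by rw [hσ]
  have hcast01 : ((r 0 : ℂ)) ≠ (r 1 : ℂ) := by exact_mod_cast fun h => h01 (by exact_mod_cast h)
  have hcast02 : ((r 0 : ℂ)) ≠ (r 2 : ℂ) := by exact_mod_cast fun h => h02 (by exact_mod_cast h)
  have hcast12 : ((r 1 : ℂ)) ≠ (r 2 : ℂ) := by exact_mod_cast fun h => h12 (by exact_mod_cast h)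
  have hx01 : x0 ≠ x1 := fun h => hcast01 (congrArg Subtype.val h)
  have hx02 : x0 ≠ x2 := fun h => hcast02 (congrArg Subtype.val h)
  have hx12 : x1 ≠ x2 := fun h => hcast12 (congrArg Subtype.val h)
  have hinjσ : Function.Injective (fun t : F.rootSet ℂ => σ • t) := MulAction.injective σ
  have hv1ne : ((σ • x1 : F.rootSet ℂ):ℂ) ≠ (r 1:ℂ) := by
    intro h
    have : σ • x1 = σ • x0 := by
      apply Subtype.ext; rw [h, hval0]
    exact hx01 (hinjσ this).symm
  have hv2ne : ((σ • x2 : F.rootSet ℂ):ℂ) ≠ (r 1:ℂ) := by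
    intro h
    have : σ • x2 = σ • x0 := by
      apply Subtype.ext; rw [h, hval0]
    exact hx02 (hinjσ this).symm
  have hv12ne : ((σ • x1 : F.rootSet ℂ):ℂ) ≠ ((σ • x2 : F.rootSet ℂ):ℂ) := by
    intro h
    exact hx12 (hinjσ (Subtype.ext h))
  have hab_bc : a = b ∧ b = c := by
    rcases hcov (σ • x1) with hA1 | hA1 | hA1
    swap
    · exact absurd hA1 hv1ne
    -- Case I : σ•x1 = r 0, hence σ•x2 = r 2
    · have hA2 : ((σ • x2 : F.rootSet ℂ):ℂ) = (r 2:ℂ) := by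
        rcases hcov (σ • x2) with h' | h' | h'
        · rw [← hA1] at h'; exact absurd h' hv12ne.symm
        · exact absurd h' hv2ne
        · exact h'
      rw [hval0, hA1, hA2] at hrel2
      have LI : (a:ℝ) * v + (b:ℝ) * u + (c:ℝ) * w = 0 := by
        have := toLog (r 1) (r 0) (r 2) (hne 1) (hne 0) (hne 2) hrel2
        linarith
      have hab' : ((a:ℝ) - (b:ℝ)) * (u - v) = 0 := by linear_combination Lmain - LI
      have hab : (a:ℝ) = (b:ℝ) := by
        rcases mul_eq_zero.mp hab' with h' | h'
        · linarith [sub_eq_zero.mp h']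
        · exact absurd (sub_eq_zero.mp h') huv
      have hca : ((c:ℝ) - (a:ℝ)) * w = 0 := by linear_combination Lmain - (a:ℝ)*hsum + v*hab
      have hc : (c:ℝ) = (a:ℝ) := by
        rcases mul_eq_zero.mp hca with h' | h'
        · linarith [sub_eq_zero.mp h']
        · linarith
      constructor
      · exact_mod_cast hab
      · have : (b:ℝ) = (c:ℝ) := by linarith
        exact_mod_cast this
    -- Case II : σ•x1 = r 2, hence σ•x2 = r 0
    · have hA2 : ((σ • x2 : F.rootSet ℂ):ℂ) = (r 0:ℂ) := by
        rcases hcov (σ • x2) with h' | h' | h'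
        · exact h'
        · exact absurd h' hv2ne
        · rw [← hA1] at h'; exact absurd h' hv12ne.symm
      rw [hval0, hA1, hA2] at hrel2
      have LII : (a:ℝ) * v + (b:ℝ) * w + (c:ℝ) * u = 0 := by
        have := toLog (r 1) (r 2) (r 0) (hne 1) (hne 2) (hne 0) hrel2
        linarith
      have eq1 : ((a:ℝ) - c) * u + ((b:ℝ) - c) * v = 0 := by
        linear_combination Lmain - (c:ℝ)*hsum
      have eq2 : (-((b:ℝ) - c)) * u + (((a:ℝ) - c) - ((b:ℝ) - c)) * v = 0 := by
        linear_combination LII - (b:ℝ)*hsum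
      have key : (((a:ℝ)-c)^2 - ((a:ℝ)-c)*((b:ℝ)-c) + ((b:ℝ)-c)^2) * u = 0 := by
        linear_combination (((a:ℝ)-c) - ((b:ℝ)-c)) * eq1 - ((b:ℝ)-c) * eq2
      have hq : ((a:ℝ)-c)^2 - ((a:ℝ)-c)*((b:ℝ)-c) + ((b:ℝ)-c)^2 = 0 := by
        rcases mul_eq_zero.mp key with h' | h'
        · exact h'
        · linarith
      have hm : (a:ℝ) - c = 0 := by nlinarith [sq_nonneg ((a:ℝ)-c - ((b:ℝ)-c)), sq_nonneg ((a:ℝ)-c), sq_nonneg ((b:ℝ)-c)]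
      have hn : (b:ℝ) - c = 0 := by nlinarith [sq_nonneg ((a:ℝ)-c - ((b:ℝ)-c)), sq_nonneg ((a:ℝ)-c), sq_nonneg ((b:ℝ)-c)]
      have hac : (a:ℝ) = (c:ℝ) := by linarith
      have hbc : (b:ℝ) = (c:ℝ) := by linarith
      exact ⟨by exact_mod_cast hac.trans hbc.symm, by exact_mod_cast hbc⟩
  obtain ⟨hb', hc'⟩ := hab_bc
  subst hb'
  subst hc'
  refine ⟨rfl, rfl, ?_⟩
  have hprod : (((r 0:ℂ)) * (r 1:ℂ) * (r 2:ℂ))^a = 1 := by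
    rw [mul_zpow, mul_zpow]; exact hrel
  rw [c3] at hprod
  by_contra hodd
  rw [Int.not_even_iff_odd] at hodd
  rw [hodd.neg_one_zpow] at hprod
  norm_num at hprod


lemma gw_exp_indep {ι : Type*} [Fintype ι] [DecidableEq ι] (lam : ι → ℂ)
    (hinj : Function.Injective lam) (hne1 : ∀ i, lam i ≠ 1)
    (q : ι → ℂ) (B C : ℂ)
    (H : ∀ n : ℕ, (∑ i, q i * lam i ^ n) + B + C * n = 0) :
    (∀ i, q i = 0) ∧ B = 0 ∧ C = 0 := by
  classical
  have H2 : ∀ n : ℕ, ∑ i, (q i * (lam i - 1)^2) * lam i ^ n = 0 := by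
    intro n
    have e0 := H n
    have e1 := H (n+1)
    have e2 := H (n+2)
    push_cast at e1 e2
    have key : ∑ i, (q i * (lam i - 1)^2) * lam i ^ n
        = (∑ i, q i * lam i ^ (n+2)) - 2*(∑ i, q i * lam i ^ (n+1))
          + (∑ i, q i * lam i ^ n) := by
      rw [Finset.mul_sum, ← Finset.sum_sub_distrib, ← Finset.sum_add_distrib]
      refine Finset.sum_congr rfl fun i _ => ?_
      ring
    rw [key]
    linear_combination e2 - 2 * e1 + e0
  have hq : ∀ i, q i * (lam i - 1)^2 = 0 := by
    set m := Fintype.card ι with hm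
    set e := Fintype.equivFin ι with he
    set lam' : Fin m → ℂ := fun j => lam (e.symm j) with hlam'
    have hinj' : Function.Injective lam' := hinj.comp (Equiv.injective _)
    set M := Matrix.vandermonde lam' with hM
    have hdet : M.det ≠ 0 := Matrix.det_vandermonde_ne_zero_iff.mpr hinj'
    set xv : Fin m → ℂ := fun j => q (e.symm j) * (lam (e.symm j) - 1)^2 with hxv
    have hmul : Matrix.vecMul xv M = 0 := by
      funext k
      have : Matrix.vecMul xv M k = ∑ j, xv j * lam' j ^ (k:ℕ) := by
        simp [Matrix.vecMul, dotProduct, hM, Matrix.vandermonde]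
      rw [this]
      have := Fintype.sum_equiv e.symm (fun j => xv j * lam' j ^ (k:ℕ))
        (fun i => (q i * (lam i - 1)^2) * lam i ^ (k:ℕ)) (fun j => rfl)
      rw [this]
      exact H2 (k:ℕ)
    have hxv0 : xv = 0 := by
      have hu : IsUnit M := (Matrix.isUnit_iff_isUnit_det M).mpr hdet.isUnit
      apply Matrix.vecMul_injective_iff_isUnit.mpr hu (a₁ := xv) (a₂ := 0)
      show Matrix.vecMul xv M = Matrix.vecMul 0 M
      rw [hmul, Matrix.zero_vecMul]
    intro i
    have := congrFun hxv0 (e i)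
    simpa [hxv] using this
  have hq' : ∀ i, q i = 0 := by
    intro i
    have := hq i
    rcases mul_eq_zero.mp this with h | h
    · exact h
    · exact absurd (sub_eq_zero.mp (pow_eq_zero_iff (n := 2) (by norm_num) |>.mp h)) (hne1 i)
  refine ⟨hq', ?_, ?_⟩
  · have := H 0
    simp [hq'] at this
    exact this
  · have h0 := H 0
    have h1 := H 1
    simp [hq'] at h0 h1
    rw [h0] at h1
    simpa using h1

lemma gwFv_inj (p : ℕ) : Function.Injective (gwFv p) := by
  intro v w h
  apply Subtype.ext
  have := congrArg Finsupp.equivFunOnFinite h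
  simpa [gwFv] using this

lemma gwFv_apply (p : ℕ) (v : {v : Fin 3 → ℕ // ∑ t, v t = p}) (i : Fin 3) :
    gwFv p v i = v.1 i := rfl

lemma gw_eval_homog (p : ℕ) (Q : MvPolynomial (Fin 3) ℂ) (hQ : Q.IsHomogeneous p)
    (z : Fin 3 → ℂ) :
    MvPolynomial.eval z Q = ∑ v : {v : Fin 3 → ℕ // ∑ t, v t = p},
      MvPolynomial.coeff (gwFv p v) Q * ((z 0)^(v.1 0) * (z 1)^(v.1 1) * (z 2)^(v.1 2)) := by
  classical
  rw [MvPolynomial.eval_eq']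
  set S1 : Finset (Fin 3 →₀ ℕ) := Finset.univ.image (gwFv p) with hS1
  have hsub : Q.support ⊆ S1 := by
    intro d hd
    have hc : MvPolynomial.coeff d Q ≠ 0 := MvPolynomial.mem_support_iff.mp hd
    have hdeg : ∑ t, d t = p := by
      have := hQ hc
      rw [← this]
      simp [Finsupp.weight, Finsupp.linearCombination, Finsupp.sum_fintype]
    rw [hS1, Finset.mem_image]
    exact ⟨⟨(d : Fin 3 → ℕ), hdeg⟩, Finset.mem_univ _, by
      simp [gwFv]⟩
  have step1 : ∑ d ∈ Q.support, MvPolynomial.coeff d Q * ∏ i, z i ^ d i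
      = ∑ d ∈ S1, MvPolynomial.coeff d Q * ∏ i, z i ^ d i := by
    apply Finset.sum_subset hsub
    intro d _ hd
    rw [MvPolynomial.notMem_support_iff.mp hd, zero_mul]
  rw [step1, hS1, Finset.sum_image (fun v _ w _ h => gwFv_inj p h)]
  refine Finset.sum_congr rfl fun v _ => ?_
  congr 1
  rw [Fin.prod_univ_three]
  simp [gwFv_apply]

open MvPolynomial in
lemma gw_monomial_indep (p : ℕ) (g : {v : Fin 3 → ℕ // ∑ t, v t = p} → ℂ)
    (h : ∑ v : {v : Fin 3 → ℕ // ∑ t, v t = p},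
      MvPolynomial.C (g v) * ((X 0 : MvPolynomial (Fin 3) ℂ) ^ (v.1 0) * X 1 ^ (v.1 1) * X 2 ^ (v.1 2))
      = 0) : ∀ v, g v = 0 := by
  classical
  intro v0
  have hmon : ∀ v : {v : Fin 3 → ℕ // ∑ t, v t = p},
      MvPolynomial.C (g v) * ((X 0 : MvPolynomial (Fin 3) ℂ) ^ (v.1 0) * X 1 ^ (v.1 1) * X 2 ^ (v.1 2))
      = MvPolynomial.monomial (gwFv p v) (g v) := by
    intro v
    rw [MvPolynomial.monomial_eq]
    congr 1
    rw [Finsupp.prod_fintype _ _ (fun i => pow_zero _), Fin.prod_univ_three]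
    simp [gwFv_apply]
  rw [Finset.sum_congr rfl (fun v _ => hmon v)] at h
  have hcoeff := congrArg (MvPolynomial.coeff (gwFv p v0)) h
  rw [MvPolynomial.coeff_sum] at hcoeff
  simp only [MvPolynomial.coeff_monomial, MvPolynomial.coeff_zero] at hcoeff
  rw [Finset.sum_congr rfl (fun v _ => by
    rw [show (if gwFv p v = gwFv p v0 then g v else 0) = (if v = v0 then g v else 0) from
      if_congr ⟨fun h' => gwFv_inj p h', fun h' => by rw [h']⟩ rfl rfl])] at hcoeff
  rw [Finset.sum_ite_eq' Finset.univ v0 g] at hcoeff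
  simpa using hcoeff

open MvPolynomial in
noncomputable def gwW (a : ℂ) : MvPolynomial (Fin 3) ℂ :=
  C (-1) * (X 0 * X 0 * X 0) + C 1 * (X 1 * X 1 * X 1) + C (-1) * (X 2 * X 2 * X 2)
    + C a * (X 0 * X 0 * X 2) + C a * (X 0 * X 1 * X 1) + C (2*a) * (X 1 * X 2 * X 2)
    + C (-(a^2)) * (X 1 * X 1 * X 2) + C (-3) * (X 0 * X 1 * X 2)

open MvPolynomial in
lemma gwW_homog (a : ℂ) : (gwW a).IsHomogeneous 3 := by
  have h3 : ∀ (i j k : Fin 3) (r : ℂ),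
      ((C r * (X i * X j * X k)) : MvPolynomial (Fin 3) ℂ).IsHomogeneous 3 := by
    intro i j k r
    have := (((isHomogeneous_X ℂ i).mul (isHomogeneous_X ℂ j)).mul (isHomogeneous_X ℂ k)).C_mul r
    simpa using this
  unfold gwW
  repeat' apply MvPolynomial.IsHomogeneous.add
  all_goals apply h3

lemma gwW_eval (a x y z : ℂ) :
    MvPolynomial.eval ![x, y, z] (gwW a) =
      -(x^3) + y^3 - z^3 + a*(x^2*z) + a*(x*y^2) + 2*a*(y*z^2) - a^2*(y^2*z) - 3*(x*y*z) := by
  simp [gwW]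
  ring

lemma gwW_antisym (a x y z : ℂ) :
    MvPolynomial.eval ![y, z, a*z - x] (gwW a) = - MvPolynomial.eval ![x, y, z] (gwW a) := by
  rw [gwW_eval, gwW_eval]
  ring

lemma gwW_init (a : ℂ) : MvPolynomial.eval ![1, a, a^2] (gwW a) = -1 := by
  rw [gwW_eval]
  ring

lemma gw_forward (A : ℤ) (G : ℕ → ℂ)
    (h0 : G 0 = 1) (h1 : G 1 = (A : ℂ)) (h2 : G 2 = (A : ℂ) ^ 2)
    (hrec : ∀ n : ℕ, G (n + 3) = (A : ℂ) * G (n + 2) - G n)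
    (p k : ℕ) (hpk : p = 6 * k) :
    ¬ LinearIndependent ℂ
      (Sum.elim
        (fun v : {v : Fin 3 → ℕ // ∑ t, v t = p} =>
          fun n : ℕ => G n ^ (v.1 0) * G (n + 1) ^ (v.1 1) * G (n + 2) ^ (v.1 2))
        (fun j : Fin 2 =>
          if j = 0 then (fun _ : ℕ => (1 : ℂ)) else fun n : ℕ => (n : ℂ))) := by
  classical
  rw [Fintype.not_linearIndependent_iff]
  set Q : MvPolynomial (Fin 3) ℂ := gwW (A:ℂ) ^ (2*k) with hQ
  have hQhom : Q.IsHomogeneous p := by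
    have := (gwW_homog (A:ℂ)).pow (2*k)
    rw [show 3*(2*k) = 6*k from by ring] at this
    rw [hQ, hpk]
    exact this
  -- the invariant
  set h : ℕ → ℂ := fun n => MvPolynomial.eval ![G n, G (n+1), G (n+2)] (gwW (A:ℂ)) with hh
  have hstep : ∀ n, h (n+1) = - h n := by
    intro n
    have := gwW_antisym (A:ℂ) (G n) (G (n+1)) (G (n+2))
    rw [hh]
    simp only
    rw [show G (n+1+1+1) = (A:ℂ) * G (n+2) - G n from hrec n]
    convert this using 3 <;> norm_num
  have hval : ∀ n, h n = (-1)^(n+1) := by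
    intro n
    induction n with
    | zero =>
      have hn : ((-1:ℂ))^(0+1) = -1 := by norm_num
      rw [hn, hh]
      simp only
      rw [show (0:ℕ)+1 = 1 from rfl, show (0:ℕ)+2 = 2 from rfl, h0, h1, h2]
      exact gwW_init (A:ℂ)
    | succ m ih =>
      rw [hstep m, ih]
      rw [pow_succ]
      ring
  refine ⟨Sum.elim (fun v => MvPolynomial.coeff (gwFv p v) Q) (fun j => if j = 0 then -1 else 0),
    ?_, Sum.inr 0, by simp⟩
  rw [Fintype.sum_sum_type]
  funext n
  have hpt : ∀ (f g : ℕ → ℂ) , (f + g) n = f n + g n := fun _ _ => rfl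
  show (∑ v : {v : Fin 3 → ℕ // ∑ t, v t = p},
      MvPolynomial.coeff (gwFv p v) Q • (fun n : ℕ => G n ^ (v.1 0) * G (n + 1) ^ (v.1 1) * G (n + 2) ^ (v.1 2))
      + ∑ j : Fin 2, (if j = 0 then (-1:ℂ) else 0) • (if j = 0 then (fun _ : ℕ => (1 : ℂ)) else fun n : ℕ => (n : ℂ))) n = (0 : ℂ)
  rw [hpt]
  have e1 : (∑ v : {v : Fin 3 → ℕ // ∑ t, v t = p},
      MvPolynomial.coeff (gwFv p v) Q • (fun n : ℕ => G n ^ (v.1 0) * G (n + 1) ^ (v.1 1) * G (n + 2) ^ (v.1 2))) n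
      = ∑ v : {v : Fin 3 → ℕ // ∑ t, v t = p},
      MvPolynomial.coeff (gwFv p v) Q * (G n ^ (v.1 0) * G (n + 1) ^ (v.1 1) * G (n + 2) ^ (v.1 2)) := by
    rw [Finset.sum_apply]
    rfl
  have e2 : (∑ j : Fin 2, (if j = 0 then (-1:ℂ) else 0) • (if j = 0 then (fun _ : ℕ => (1 : ℂ)) else fun n : ℕ => (n : ℂ))) n = -1 := by
    rw [Finset.sum_apply]
    rw [Fin.sum_univ_two]
    norm_num
  rw [e1, e2]
  have e3 := gw_eval_homog p Q hQhom ![G n, G (n+1), G (n+2)]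
  have e4 : MvPolynomial.eval ![G n, G (n+1), G (n+2)] Q = 1 := by
    rw [hQ, map_pow]
    rw [show MvPolynomial.eval ![G n, G (n+1), G (n+2)] (gwW (A:ℂ)) = h n from rfl, hval n]
    rw [← pow_mul]
    apply Even.neg_one_pow
    exact ⟨(n+1)*k, by ring⟩
  simp only [Matrix.cons_val_zero, Matrix.cons_val_one, Matrix.head_cons,
    Matrix.cons_val_two, Matrix.tail_cons] at e3
  rw [← e3, e4]
  ring

set_option maxHeartbeats 1000000 in
lemma gw_reverse (A : ℤ) (hA : 2 < A) (G : ℕ → ℂ)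
    (h0 : G 0 = 1) (h1 : G 1 = (A : ℂ)) (h2 : G 2 = (A : ℂ) ^ 2)
    (hrec : ∀ n : ℕ, G (n + 3) = (A : ℂ) * G (n + 2) - G n)
    (p : ℕ) (hp : 1 ≤ p) (hp6 : ¬ (6 ∣ p)) :
    LinearIndependent ℂ
      (Sum.elim
        (fun v : {v : Fin 3 → ℕ // ∑ t, v t = p} =>
          fun n : ℕ => G n ^ (v.1 0) * G (n + 1) ^ (v.1 1) * G (n + 2) ^ (v.1 2))
        (fun j : Fin 2 =>
          if j = 0 then (fun _ : ℕ => (1 : ℂ)) else fun n : ℕ => (n : ℂ))) := by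
  classical
  have hA3 : (3:ℝ) ≤ (A:ℝ) := by exact_mod_cast hA
  obtain ⟨r, hr, hI0, hI1, hI2⟩ := gw_exists_roots (A:ℝ) hA3
  have h01 : r 0 ≠ r 1 := by intro h; rw [h] at hI0; exact absurd hI1.1 (by linarith [hI0.2])
  have h02 : r 0 ≠ r 2 := by intro h; rw [h] at hI0; have := hI2.1; linarith [hI0.2]
  have h12 : r 1 ≠ r 2 := by intro h; rw [h] at hI1; have := hI2.1; linarith [hI1.2]
  obtain ⟨hs1, hs2, hs3⟩ := gw_vieta (A:ℝ) r hr h01 h02 h12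
  set R : Fin 3 → ℂ := fun i => ((r i : ℝ) : ℂ) with hR
  have hrC : ∀ i, (R i)^3 - (A:ℂ) * (R i)^2 + 1 = 0 := by
    intro i
    have := congrArg (fun t : ℝ => (t:ℂ)) (hr i)
    push_cast at this
    convert this using 2 <;> push_cast <;> ring
  have hC01 : R 0 ≠ R 1 := by simp only [hR]; exact_mod_cast fun h => h01 (by exact_mod_cast h)
  have hC02 : R 0 ≠ R 2 := by simp only [hR]; exact_mod_cast fun h => h02 (by exact_mod_cast h)
  have hC12 : R 1 ≠ R 2 := by simp only [hR]; exact_mod_cast fun h => h12 (by exact_mod_cast h)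
  have hs1C : R 0 + R 1 + R 2 = (A:ℂ) := by
    simp only [hR]
    have := congrArg (fun t : ℝ => (t:ℂ)) hs1; push_cast at this; exact_mod_cast this
  have hs2C : R 0 * R 1 + R 0 * R 2 + R 1 * R 2 = 0 := by
    simp only [hR]
    have := congrArg (fun t : ℝ => (t:ℂ)) hs2; push_cast at this; exact_mod_cast this
  have hRne : ∀ i, R i ≠ 0 := by
    intro i hzero
    have := hrC i
    rw [hzero] at this
    norm_num at this
  obtain ⟨cc, hccne, hGf⟩ := gw_G_formula (A:ℂ) R hrC hC01 hC02 hC12 hs1C hs2C G h0 h1 h2 hrec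
  -- the exponents type
  set ι := {v : Fin 3 → ℕ // ∑ t, v t = p} with hι
  set lam : ι → ℂ := fun v => (R 0)^(v.1 0) * (R 1)^(v.1 1) * (R 2)^(v.1 2) with hlam
  -- injectivity and ≠ 1 of lam
  have hmaster : ∀ a b c : ℤ, (R 0)^a * (R 1)^b * (R 2)^c = 1 → a = b ∧ b = c ∧ Even a :=
    fun a b c h => gw_mult_indep A hA r hr hI0 hI1 hI2 a b c h
  have hinj : Function.Injective lam := by
    intro v w hvw
    have hrel : (R 0)^((v.1 0 : ℤ) - (w.1 0 : ℤ)) * (R 1)^((v.1 1 : ℤ) - (w.1 1 : ℤ)) *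
        (R 2)^((v.1 2 : ℤ) - (w.1 2 : ℤ)) = 1 := by
      rw [zpow_sub₀ (hRne 0), zpow_sub₀ (hRne 1), zpow_sub₀ (hRne 2), div_mul_div_comm,
        div_mul_div_comm, div_eq_one_iff_eq (by
          exact mul_ne_zero (mul_ne_zero (zpow_ne_zero _ (hRne 0)) (zpow_ne_zero _ (hRne 1)))
            (zpow_ne_zero _ (hRne 2)))]
      rw [zpow_natCast, zpow_natCast, zpow_natCast, zpow_natCast, zpow_natCast, zpow_natCast]
      exact hvw
    obtain ⟨hab, hbc, _⟩ := hmaster _ _ _ hrel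
    have hvs := v.2
    have hws := w.2
    rw [Fin.sum_univ_three] at hvs hws
    have e0 : v.1 0 = w.1 0 := by omega
    have e1 : v.1 1 = w.1 1 := by omega
    have e2 : v.1 2 = w.1 2 := by omega
    apply Subtype.ext
    funext t
    fin_cases t
    · exact e0
    · exact e1
    · exact e2
  have hne1 : ∀ v, lam v ≠ 1 := by
    intro v hone
    have hrel : (R 0)^((v.1 0 : ℤ)) * (R 1)^((v.1 1 : ℤ)) * (R 2)^((v.1 2 : ℤ)) = 1 := by
      rw [zpow_natCast, zpow_natCast, zpow_natCast]
      exact hone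
    obtain ⟨hab, hbc, heven⟩ := hmaster _ _ _ hrel
    have hvs := v.2
    rw [Fin.sum_univ_three] at hvs
    obtain ⟨m, hm⟩ := heven
    apply hp6
    refine ⟨m.toNat, ?_⟩
    omega
  -- linear independence
  rw [Fintype.linearIndependent_iff]
  intro g hg
  have hgn : ∀ n : ℕ, (∑ v : ι, g (Sum.inl v) * (G n ^ (v.1 0) * G (n+1) ^ (v.1 1) * G (n+2) ^ (v.1 2)))
      + g (Sum.inr 0) + g (Sum.inr 1) * n = 0 := by
    intro n
    have h' := congrFun hg n
    simp only [Finset.sum_apply, Pi.smul_apply, smul_eq_mul, Fintype.sum_sum_type,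
      Sum.elim_inl, Sum.elim_inr, Fin.sum_univ_two, Pi.zero_apply] at h'
    norm_num at h'
    linear_combination h'
  -- polynomial machinery
  set ell : Fin 3 → MvPolynomial (Fin 3) ℂ :=
    fun t => ∑ i, MvPolynomial.C (cc i * R i ^ (t:ℕ)) * MvPolynomial.X i with hell
  have hellhom : ∀ t, (ell t).IsHomogeneous 1 := by
    intro t
    apply MvPolynomial.IsHomogeneous.sum
    intro i _
    exact MvPolynomial.isHomogeneous_C_mul_X _ _
  set Q : MvPolynomial (Fin 3) ℂ := ∑ v : ι, MvPolynomial.C (g (Sum.inl v)) *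
      ((ell 0)^(v.1 0) * (ell 1)^(v.1 1) * (ell 2)^(v.1 2)) with hQdef
  have hQhom : Q.IsHomogeneous p := by
    apply MvPolynomial.IsHomogeneous.sum
    intro v _
    have hterm := (((hellhom 0).pow (v.1 0)).mul ((hellhom 1).pow (v.1 1))).mul
      ((hellhom 2).pow (v.1 2))
    have hterm2 := hterm.C_mul (g (Sum.inl v))
    have hv := v.2
    rw [Fin.sum_univ_three] at hv
    convert hterm2 using 1
    omega
  have hevalL : ∀ (t : Fin 3) (n : ℕ),
      MvPolynomial.eval (fun i => R i ^ n) (ell t) = G (n + (t:ℕ)) := by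
    intro t n
    simp only [hell, map_sum, map_mul, MvPolynomial.eval_C, MvPolynomial.eval_X]
    rw [hGf (n + (t:ℕ))]
    refine Finset.sum_congr rfl fun i _ => ?_
    rw [pow_add]
    ring
  have hevalQ1 : ∀ n, MvPolynomial.eval (fun i => R i ^ n) Q
      = ∑ v : ι, g (Sum.inl v) * (G n ^ (v.1 0) * G (n+1) ^ (v.1 1) * G (n+2) ^ (v.1 2)) := by
    intro n
    rw [hQdef, map_sum]
    refine Finset.sum_congr rfl fun v _ => ?_
    rw [map_mul, MvPolynomial.eval_C, map_mul, map_mul, map_pow, map_pow, map_pow,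
      hevalL 0 n, hevalL 1 n, hevalL 2 n]
    norm_num
  have hpowswap : ∀ (x : ℂ) (i n : ℕ), (x^n)^i = (x^i)^n := by
    intro x i n
    rw [← pow_mul, ← pow_mul, Nat.mul_comm]
  have hevalQ2 : ∀ n, MvPolynomial.eval (fun i => R i ^ n) Q
      = ∑ v : ι, MvPolynomial.coeff (gwFv p v) Q * lam v ^ n := by
    intro n
    rw [gw_eval_homog p Q hQhom]
    refine Finset.sum_congr rfl fun v _ => ?_
    congr 1
    rw [hlam]
    simp only
    rw [mul_pow, mul_pow, hpowswap (R 0), hpowswap (R 1), hpowswap (R 2)]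
  have H : ∀ n : ℕ, (∑ v : ι, MvPolynomial.coeff (gwFv p v) Q * lam v ^ n)
      + g (Sum.inr 0) + g (Sum.inr 1) * n = 0 := by
    intro n
    rw [← hevalQ2 n, hevalQ1 n]
    exact hgn n
  obtain ⟨hq0, hB, hC⟩ := gw_exp_indep lam hinj hne1 (fun v => MvPolynomial.coeff (gwFv p v) Q)
    (g (Sum.inr 0)) (g (Sum.inr 1)) H
  have hQ0 : Q = 0 := by
    apply MvPolynomial.ext
    intro d
    rw [MvPolynomial.coeff_zero]
    by_cases hd : ∑ t, d t = p
    · have hcv := hq0 ⟨(d : Fin 3 → ℕ), hd⟩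
      rwa [show gwFv p ⟨(d : Fin 3 → ℕ), hd⟩ = d from Finsupp.equivFunOnFinite_symm_coe d] at hcv
    · by_contra hne
      apply hd
      have hh := hQhom hne
      rw [← hh]
      simp [Finsupp.weight, Finsupp.linearCombination, Finsupp.sum_fintype]
  -- invert the substitution
  set L : Matrix (Fin 3) (Fin 3) ℂ := Matrix.of (fun t i => cc i * R i ^ (t:ℕ)) with hLdef
  have hRinj : Function.Injective R := by
    intro i j hij
    fin_cases i <;> fin_cases j <;>
      first
        | rfl
        | exact absurd hij hC01 | exact absurd hij hC02 | exact absurd hij hC12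
        | exact absurd hij.symm hC01 | exact absurd hij.symm hC02 | exact absurd hij.symm hC12
  have hLfac : L = (Matrix.vandermonde R).transpose * Matrix.diagonal cc := by
    ext t i
    rw [Matrix.mul_apply]
    simp only [Matrix.transpose_apply, Matrix.vandermonde, Matrix.diagonal, Matrix.of_apply,
      mul_ite, mul_zero]
    rw [Finset.sum_ite_eq' Finset.univ i (fun k => R k ^ (t:ℕ) * cc k)]
    simp [mul_comm]
    rfl
  have hdetL : L.det ≠ 0 := by
    rw [hLfac, Matrix.det_mul, Matrix.det_transpose, Matrix.det_diagonal]
    exact mul_ne_zero (Matrix.det_vandermonde_ne_zero_iff.mpr hRinj)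
      (Finset.prod_ne_zero_iff.mpr fun i _ => hccne i)
  set N : Matrix (Fin 3) (Fin 3) ℂ := L⁻¹ with hNdef
  have hLN : L * N = 1 := Matrix.mul_nonsing_inv L (Ne.isUnit hdetL)
  set linv : Fin 3 → MvPolynomial (Fin 3) ℂ :=
    fun i => ∑ u, MvPolynomial.C (N i u) * MvPolynomial.X u with hlinv
  have hbind : ∀ t : Fin 3, MvPolynomial.bind₁ linv (ell t) = MvPolynomial.X t := by
    intro t
    simp only [hell, map_sum]
    have step : ∀ i : Fin 3, MvPolynomial.bind₁ linv (MvPolynomial.C (cc i * R i ^ (t:ℕ))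
        * MvPolynomial.X i) = ∑ u, MvPolynomial.C (L t i * N i u) * MvPolynomial.X u := by
      intro i
      rw [map_mul, MvPolynomial.algHom_C, MvPolynomial.bind₁_X_right]
      simp only [hlinv, Finset.mul_sum]
      refine Finset.sum_congr rfl fun u _ => ?_
      rw [MvPolynomial.algebraMap_eq, ← mul_assoc, ← MvPolynomial.C_mul]
      rfl
    rw [Finset.sum_congr rfl (fun i _ => step i), Finset.sum_comm]
    have collect : ∀ u : Fin 3, (∑ i, MvPolynomial.C (L t i * N i u) * MvPolynomial.X u)
        = MvPolynomial.C ((L * N) t u) * MvPolynomial.X u := by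
      intro u
      rw [← Finset.sum_mul, Matrix.mul_apply, ← map_sum MvPolynomial.C]
    rw [Finset.sum_congr rfl (fun u _ => collect u), hLN]
    simp [Matrix.one_apply, apply_ite MvPolynomial.C, ite_mul, Finset.sum_ite_eq]
  have hQ2 : (0 : MvPolynomial (Fin 3) ℂ) = ∑ v : ι, MvPolynomial.C (g (Sum.inl v)) *
      ((MvPolynomial.X 0 : MvPolynomial (Fin 3) ℂ)^(v.1 0) * MvPolynomial.X 1^(v.1 1)
        * MvPolynomial.X 2^(v.1 2)) := by
    calc (0:MvPolynomial (Fin 3) ℂ) = MvPolynomial.bind₁ linv Q := by rw [hQ0, map_zero]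
    _ = _ := by
      rw [hQdef, map_sum]
      refine Finset.sum_congr rfl fun v _ => ?_
      rw [map_mul, MvPolynomial.algHom_C, map_mul, map_mul, map_pow, map_pow, map_pow,
        hbind 0, hbind 1, hbind 2, MvPolynomial.algebraMap_eq]
  have hginl := gw_monomial_indep p (fun v => g (Sum.inl v)) hQ2.symm
  intro i
  rcases i with v | j
  · exact hginl v
  · fin_cases j
    · exact hB
    · exact hC

/-- **Corollary 5.9** (cor:niceproof) of Greene–Wilf, as a linear-independence
statement: for the subword-avoidance sequence `G` over an alphabet of `A > 2`
letters, the degree-`p` monomials in `G(n), G(n+1), G(n+2)` together with `1`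
and `n` are linearly independent iff `6 ∤ p`. -/
theorem subword_monomials_linearIndependent_iff
    (A : ℤ) (hA : 2 < A) (G : ℕ → ℂ)
    (h0 : G 0 = 1) (h1 : G 1 = (A : ℂ)) (h2 : G 2 = (A : ℂ) ^ 2)
    (hrec : ∀ n : ℕ, G (n + 3) = (A : ℂ) * G (n + 2) - G n)
    (p : ℕ) (hp : 1 ≤ p) :
    LinearIndependent ℂ
      (Sum.elim
        (fun v : {v : Fin 3 → ℕ // ∑ t, v t = p} =>
          fun n : ℕ => G n ^ (v.1 0) * G (n + 1) ^ (v.1 1) * G (n + 2) ^ (v.1 2))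
        (fun j : Fin 2 =>
          if j = 0 then (fun _ : ℕ => (1 : ℂ)) else fun n : ℕ => (n : ℂ)))
      ↔ ¬ (6 ∣ p) := by
  constructor
  · intro hli hdvd
    obtain ⟨k, hk⟩ := hdvd
    exact gw_forward A G h0 h1 h2 hrec p k hk hli
  · intro h6
    exact gw_reverse A hA G h0 h1 h2 hrec p hp h6
end
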